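/- arXiv:2006.09734 — 4 statements merged into one kernel-verified Lean document; each statement's English description precedes it below -/
import Mathlib

section
/- Let Γ: ℝⁿ ⇒ ℝˡ be a set-valued mapping with closed graph and let (x̄,ȳ) ∈ ℝⁿ × ℝˡ with Γ(x̄) ≠ ∅. If Γ possesses the Aubin property at every point (x̄,y) with y ∈ Π(ȳ, Γ(x̄)), then ρ_Γ is finite and Lipschitz continuous on some neighborhood of (x̄,ȳ). -/
open Filter Topology RealInnerProductSpace
open scoped ENNReal NNReal

noncomputable section

/-- Fréchet (regular) normal cone to `A` at `x`. -/
def frechetNC {E : Type*} [NormedAddCommGroup E] [InnerProductSpace ℝ E]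
    (A : Set E) (x : E) : Set E :=
  {v | x ∈ A ∧ ∀ ε > 0, ∃ δ > 0, ∀ y ∈ A, ‖y - x‖ < δ → ⟪v, y - x⟫ ≤ ε * ‖y - x‖}

/-- Limiting (Mordukhovich) normal cone to `A` at `x`. -/
def limitingNC {E : Type*} [NormedAddCommGroup E] [InnerProductSpace ℝ E]
    (A : Set E) (x : E) : Set E :=
  {v | ∃ xk vk : ℕ → E, (∀ k, xk k ∈ A) ∧ Tendsto xk atTop (𝓝 x) ∧
    (∀ k, vk k ∈ frechetNC A (xk k)) ∧ Tendsto vk atTop (𝓝 v)}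

section SV
variable {E F : Type*} [NormedAddCommGroup E] [InnerProductSpace ℝ E]
  [NormedAddCommGroup F] [InnerProductSpace ℝ F]

/-- Pack a pair into the `ℓ²` product space. -/
def pl2 (x : E) (y : F) : WithLp 2 (E × F) := (WithLp.equiv 2 (E × F)).symm (x, y)

/-- Graph of a set-valued map, as a subset of the `ℓ²` product space. -/
def svGraph (Φ : E → Set F) : Set (WithLp 2 (E × F)) :=
  {p | (WithLp.equiv 2 (E × F) p).2 ∈ Φ (WithLp.equiv 2 (E × F) p).1}

/-- Limiting coderivative `D*Φ(x,y)(ys)`. -/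
def coderiv (Φ : E → Set F) (x : E) (y : F) (ys : F) : Set E :=
  {xs | pl2 xs (-ys) ∈ limitingNC (svGraph Φ) (pl2 x y)}

/-- Limiting subdifferential of a real-valued function. -/
def limSubdiff (f : E → ℝ) (x : E) : Set E :=
  {v | pl2 v (-1 : ℝ) ∈ limitingNC
    {p : WithLp 2 (E × ℝ) | f (WithLp.equiv 2 (E × ℝ) p).1 ≤ (WithLp.equiv 2 (E × ℝ) p).2}
    (pl2 x (f x))}

/-- The multiplier-union map `𝓜(x,y) = ⋃_λ D*Φ(x,y)(λ)`. -/
def Mmap (Φ : E → Set F) (x : E) (y : F) : Set E := ⋃ l : F, coderiv Φ x y l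

/-- Outer limit `Limsup_{x→x̄,y→0} 𝓜(x,y)`. -/
def MmapLimsup (Φ : E → Set F) (xb : E) : Set E :=
  {xs | ∃ (xk xsk : ℕ → E) (yk : ℕ → F), Tendsto xk atTop (𝓝 xb) ∧
    Tendsto yk atTop (𝓝 0) ∧ Tendsto xsk atTop (𝓝 xs) ∧
    ∀ k, xsk k ∈ Mmap Φ (xk k) (yk k)}

/-- AM-regularity. -/
def AMregular (Φ : E → Set F) (xb : E) : Prop := MmapLimsup Φ xb ⊆ Mmap Φ xb 0
end SV

section NormOnly
variable {E F : Type*} [NormedAddCommGroup E] [NormedAddCommGroup F]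

/-- Generalized distance function `ρ_Γ`, with value `+∞` when `Γ x = ∅`. -/
def rhoD (Γ : E → Set F) (x : E) (y : F) : ℝ≥0∞ := ⨅ z ∈ Γ x, (‖y - z‖₊ : ℝ≥0∞)

/-- Set of projections `Π(y, Γ x)`. -/
def projSet (Γ : E → Set F) (x : E) (y : F) : Set F :=
  {z | z ∈ Γ x ∧ (‖y - z‖₊ : ℝ≥0∞) = rhoD Γ x y}

/-- Aubin property of `Φ` at `(xb, yb) ∈ gph Φ`. -/
def AubinAt (Φ : E → Set F) (xb : E) (yb : F) : Prop :=
  ∃ U ∈ 𝓝 xb, ∃ V ∈ 𝓝 yb, ∃ κ : ℝ, 0 < κ ∧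
    ∀ x ∈ U, ∀ x' ∈ U, ∀ z ∈ Φ x ∩ V, ∃ w ∈ Φ x', ‖z - w‖ ≤ κ * ‖x - x'‖
end NormOnly



section Aux
variable {E F : Type*} [NormedAddCommGroup E] [NormedAddCommGroup F]

lemma rhoD_eq_infEdist (Γ : E → Set F) (x : E) (y : F) :
    rhoD Γ x y = EMetric.infEdist y (Γ x) := by
  simp only [rhoD, EMetric.infEdist, Metric.infEDist, edist_eq_enorm_sub, enorm_eq_nnnorm]

lemma rhoD_toReal (Γ : E → Set F) (x : E) (y : F) :
    (rhoD Γ x y).toReal = Metric.infDist y (Γ x) := by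
  rw [rhoD_eq_infEdist]; rfl

end Aux

theorem rho_locally_lipschitz_of_aubin (n l : ℕ)
    (Γ : EuclideanSpace ℝ (Fin n) → Set (EuclideanSpace ℝ (Fin l)))
    (hΓ : IsClosed {p : EuclideanSpace ℝ (Fin n) × EuclideanSpace ℝ (Fin l) | p.2 ∈ Γ p.1})
    (xb : EuclideanSpace ℝ (Fin n)) (yb : EuclideanSpace ℝ (Fin l))
    (hne : (Γ xb).Nonempty)
    (hAubin : ∀ y ∈ projSet Γ xb yb, AubinAt Γ xb y) :
    ∃ U ∈ 𝓝 (xb, yb), (∀ p ∈ U, rhoD Γ p.1 p.2 ≠ ⊤) ∧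
      ∃ K : ℝ≥0, LipschitzOnWith K
        (fun p : EuclideanSpace ℝ (Fin n) × EuclideanSpace ℝ (Fin l) =>
          (rhoD Γ p.1 p.2).toReal) U := by
    classical
  have hρR : ∀ x y, (rhoD Γ x y).toReal = Metric.infDist y (Γ x) := rhoD_toReal Γ
  -- each value of Γ is closed
  have hclosed : ∀ x, IsClosed (Γ x) := by
    intro x
    have : Γ x = (fun y => (x, y)) ⁻¹' {p : EuclideanSpace ℝ (Fin n) × EuclideanSpace ℝ (Fin l) | p.2 ∈ Γ p.1} := rfl
    rw [this]; exact hΓ.preimage (Continuous.prodMk_right x)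
  set ρb : ℝ := Metric.infDist yb (Γ xb) with hρb
  set P : Set (EuclideanSpace ℝ (Fin l)) := {z | z ∈ Γ xb ∧ dist yb z = ρb} with hP
  have hPsub : P ⊆ projSet Γ xb yb := by
    rintro z ⟨hz, hd⟩
    refine ⟨hz, ?_⟩
    rw [rhoD_eq_infEdist, EMetric.infEdist, ← enorm_eq_nnnorm, ← edist_eq_enorm_sub]
    rw [← ENNReal.toReal_eq_toReal_iff' (edist_ne_top _ _) (Metric.infEdist_ne_top hne)]
    rw [← dist_edist]
    exact hd
  obtain ⟨z₀, hz₀Γ, hz₀d⟩ := (hclosed xb).exists_infDist_eq_dist hne yb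
  have hPne : P.Nonempty := ⟨z₀, hz₀Γ, hz₀d.symm⟩
  have hPc : IsCompact P := by
    refine (isCompact_closedBall yb ρb).of_isClosed_subset
      ((hclosed xb).inter (isClosed_eq (continuous_const.dist continuous_id) continuous_const)) ?_
    rintro z ⟨_, hd⟩
    simpa [Metric.mem_closedBall, dist_comm] using hd.le
  -- Aubin data
  choose U hU V hV κ hκpos hκ using fun z (hz : z ∈ P) => hAubin z (hPsub hz)
  obtain ⟨t, ht⟩ := hPc.elim_nhds_subcover' (fun z hz => interior (V z hz))
    (fun z hz => interior_mem_nhds.2 (hV z hz))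
  set W : Set (EuclideanSpace ℝ (Fin l)) := ⋃ z ∈ t, interior (V z.1 z.2) with hW
  have hWopen : IsOpen W := isOpen_biUnion fun _ _ => isOpen_interior
  set κm : ℝ := 1 + ∑ z ∈ t, κ z.1 z.2 with hκm
  have hκm1 : (1 : ℝ) ≤ κm := by
    have : (0:ℝ) ≤ ∑ z ∈ t, κ z.1 z.2 :=
      Finset.sum_nonneg fun i _ => (hκpos i.1 i.2).le
    linarith
  have hκmpos : (0 : ℝ) < κm := lt_of_lt_of_le one_pos hκm1
  have hκle : ∀ i ∈ t, κ i.1 i.2 ≤ κm := by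
    intro i hi
    have h1 : κ i.1 i.2 ≤ ∑ z ∈ t, κ z.1 z.2 :=
      Finset.single_le_sum (f := fun z => κ z.1 z.2) (fun j _ => (hκpos j.1 j.2).le) hi
    linarith
  set U₀ : Set (EuclideanSpace ℝ (Fin n)) := ⋂ z ∈ t, U z.1 z.2 with hU₀def
  have hU₀ : U₀ ∈ 𝓝 xb := (Filter.biInter_finset_mem t).2 fun z _ => hU z.1 z.2
  obtain ⟨δ₀, hδ₀pos, hδ₀⟩ := Metric.mem_nhds_iff.1 hU₀
  have hU₀mem : ∀ x ∈ U₀, ∀ i ∈ t, x ∈ U i.1 i.2 := fun x hx i hi => Set.mem_iInter₂.1 hx i hi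
  -- upper bound for infDist near xb
  have hub : ∀ x ∈ Metric.ball xb δ₀, ∀ y : EuclideanSpace ℝ (Fin l), (Γ x).Nonempty ∧
      Metric.infDist y (Γ x) ≤ dist y yb + ρb + κm * dist xb x := by
    intro x hx y
    obtain ⟨zp, hzpP⟩ := hPne
    have hzW := ht hzpP
    rw [hW] at hzW
    simp only [Set.mem_iUnion] at hzW
    obtain ⟨i, hi, hziV⟩ := hzW
    have hxbU : xb ∈ U i.1 i.2 := mem_of_mem_nhds (hU i.1 i.2)
    have hxU : x ∈ U i.1 i.2 := hU₀mem x (hδ₀ hx) i hi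
    obtain ⟨w, hwΓ, hwd⟩ := hκ i.1 i.2 xb hxbU x hxU zp ⟨hzpP.1, interior_subset hziV⟩
    refine ⟨⟨w, hwΓ⟩, ?_⟩
    have h1 : Metric.infDist y (Γ x) ≤ dist y w := Metric.infDist_le_dist_of_mem hwΓ
    have h2 : dist y w ≤ dist y yb + dist yb zp + dist zp w := dist_triangle4 _ _ _ _
    have h3 : dist zp w ≤ κm * dist xb x := by
      rw [dist_eq_norm]
      calc ‖zp - w‖ ≤ κ i.1 i.2 * ‖xb - x‖ := hwd
        _ ≤ κm * ‖xb - x‖ := mul_le_mul_of_nonneg_right (hκle i hi) (norm_nonneg _)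
        _ = κm * dist xb x := by rw [dist_eq_norm]
    have h4 : dist yb zp = ρb := hzpP.2
    linarith
  -- projections of nearby points lie in W
  have hstep4 : ∃ δ : ℝ, 0 < δ ∧ δ ≤ δ₀ ∧ ∀ x ∈ Metric.ball xb δ, ∀ y ∈ Metric.ball yb δ,
      ∀ z ∈ Γ x, dist y z = Metric.infDist y (Γ x) → z ∈ W := by
    by_contra hcon
    push_neg at hcon
    have hseq : ∀ k : ℕ, ∃ x ∈ Metric.ball xb (min δ₀ (1/(k+1:ℝ))),
        ∃ y ∈ Metric.ball yb (min δ₀ (1/(k+1:ℝ))), ∃ z ∈ Γ x,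
        dist y z = Metric.infDist y (Γ x) ∧ z ∉ W := by
      intro k
      have hpos : (0:ℝ) < min δ₀ (1/(k+1:ℝ)) := lt_min hδ₀pos (by positivity)
      exact hcon _ hpos (min_le_left _ _)
    choose X hX Y hY Z hZΓ hZd hZW using hseq
    have hXd : ∀ k : ℕ, dist (X k) xb < 1/(k+1:ℝ) :=
      fun k => lt_of_lt_of_le (Metric.mem_ball.1 (hX k)) (min_le_right _ _)
    have hYd : ∀ k : ℕ, dist (Y k) yb < 1/(k+1:ℝ) :=
      fun k => lt_of_lt_of_le (Metric.mem_ball.1 (hY k)) (min_le_right _ _)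
    have hXball : ∀ k : ℕ, X k ∈ Metric.ball xb δ₀ :=
      fun k => Metric.ball_subset_ball (min_le_left _ _) (hX k)
    have hbound : ∀ k : ℕ, dist yb (Z k) ≤ ρb + (2 + κm) * (1/(k+1:ℝ)) := by
      intro k
      have h1 := (hub (X k) (hXball k) (Y k)).2
      have h2 : dist yb (Z k) ≤ dist yb (Y k) + dist (Y k) (Z k) := dist_triangle _ _ _
      rw [hZd k] at h2
      have h3 : dist yb (Y k) < 1/(k+1:ℝ) := by rw [dist_comm]; exact hYd k
      have h4 : dist (Y k) yb < 1/(k+1:ℝ) := hYd k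
      have h5 : dist xb (X k) < 1/(k+1:ℝ) := by rw [dist_comm]; exact hXd k
      have hk : (0:ℝ) < 1/(k+1:ℝ) := by positivity
      nlinarith [hκmpos]
    have hbdd : ∀ k : ℕ, Z k ∈ Metric.closedBall yb (ρb + (2 + κm)) := by
      intro k
      have h1 := hbound k
      have h2 : (1:ℝ)/(k+1:ℝ) ≤ 1 := by
        rw [div_le_one (by positivity)]
        have : (0:ℝ) ≤ (k:ℝ) := Nat.cast_nonneg k
        linarith
      have h3 : (2 + κm) * (1/(k+1:ℝ)) ≤ (2 + κm) * 1 :=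
        mul_le_mul_of_nonneg_left h2 (by linarith)
      rw [Metric.mem_closedBall, dist_comm]
      linarith
    obtain ⟨a, -, φ, hφ, hZφ⟩ :=
      tendsto_subseq_of_bounded Metric.isBounded_closedBall hbdd
    have hεk : Tendsto (fun k : ℕ => 1/(k+1:ℝ)) atTop (𝓝 0) :=
      tendsto_one_div_add_atTop_nhds_zero_nat
    have hεφ : Tendsto (fun k : ℕ => 1/((φ k)+1:ℝ)) atTop (𝓝 0) :=
      hεk.comp hφ.tendsto_atTop
    have hXφ : Tendsto (fun k => X (φ k)) atTop (𝓝 xb) := by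
      rw [tendsto_iff_dist_tendsto_zero]
      refine squeeze_zero (fun k => dist_nonneg) (fun k => (hXd (φ k)).le) hεφ
    have haΓ : a ∈ Γ xb := by
      have hconv : Tendsto (fun k => (X (φ k), Z (φ k))) atTop (𝓝 (xb, a)) :=
        hXφ.prodMk_nhds hZφ
      exact hΓ.mem_of_tendsto hconv (Filter.Eventually.of_forall fun k => hZΓ (φ k))
    have hazb : dist yb a ≤ ρb := by
      have hf : Tendsto (fun k => dist yb (Z (φ k))) atTop (𝓝 (dist yb a)) :=
        (continuous_const.dist continuous_id).continuousAt.tendsto.comp hZφ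
      have hg : Tendsto (fun k => ρb + (2 + κm) * (1/((φ k)+1:ℝ))) atTop (𝓝 (ρb + (2+κm)*0)) :=
        tendsto_const_nhds.add (tendsto_const_nhds.mul hεφ)
      rw [mul_zero, add_zero] at hg
      exact le_of_tendsto_of_tendsto' hf hg (fun k => hbound (φ k))
    have haP : a ∈ P :=
      ⟨haΓ, le_antisymm hazb (Metric.infDist_le_dist_of_mem haΓ)⟩
    have haW : a ∈ W := ht haP
    have : ∀ᶠ k in atTop, Z (φ k) ∈ W := hZφ.eventually (hWopen.mem_nhds haW)
    obtain ⟨k, hk⟩ := this.exists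
    exact hZW (φ k) hk
  obtain ⟨δ, hδpos, hδle, hδproj⟩ := hstep4
  refine ⟨Metric.ball xb δ ×ˢ Metric.ball yb δ,
    prod_mem_nhds (Metric.ball_mem_nhds _ hδpos) (Metric.ball_mem_nhds _ hδpos), ?_, ?_⟩
  · rintro ⟨x, y⟩ ⟨hx, hy⟩
    have hne' : (Γ x).Nonempty :=
      (hub x (Metric.ball_subset_ball hδle hx) y).1
    rw [rhoD_eq_infEdist]
    exact Metric.infEdist_ne_top hne'
  · refine ⟨⟨κm + 1, by positivity⟩, ?_⟩
    have key : ∀ p ∈ Metric.ball xb δ ×ˢ Metric.ball yb δ,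
        ∀ q ∈ Metric.ball xb δ ×ˢ Metric.ball yb δ,
        Metric.infDist q.2 (Γ q.1) ≤ Metric.infDist p.2 (Γ p.1)
          + (κm * dist p.1 q.1 + dist p.2 q.2) := by
      rintro ⟨x, y⟩ ⟨hx, hy⟩ ⟨x', y'⟩ ⟨hx', hy'⟩
      have hne' : (Γ x).Nonempty := (hub x (Metric.ball_subset_ball hδle hx) y).1
      obtain ⟨z, hzΓ, hzd⟩ := (hclosed x).exists_infDist_eq_dist hne' y
      have hzW : z ∈ W := hδproj x hx y hy z hzΓ hzd.symm
      rw [hW] at hzW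
      simp only [Set.mem_iUnion] at hzW
      obtain ⟨i, hi, hziV⟩ := hzW
      have hxU : x ∈ U i.1 i.2 := hU₀mem x (hδ₀ (Metric.ball_subset_ball hδle hx)) i hi
      have hx'U : x' ∈ U i.1 i.2 := hU₀mem x' (hδ₀ (Metric.ball_subset_ball hδle hx')) i hi
      obtain ⟨w, hwΓ, hwd⟩ := hκ i.1 i.2 x hxU x' hx'U z ⟨hzΓ, interior_subset hziV⟩
      have h1 : Metric.infDist y' (Γ x') ≤ dist y' w := Metric.infDist_le_dist_of_mem hwΓ
      have h2 : dist y' w ≤ dist y' y + dist y z + dist z w := dist_triangle4 _ _ _ _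
      have h3 : dist z w ≤ κm * dist x x' := by
        rw [dist_eq_norm]
        calc ‖z - w‖ ≤ κ i.1 i.2 * ‖x - x'‖ := hwd
          _ ≤ κm * ‖x - x'‖ := mul_le_mul_of_nonneg_right (hκle i hi) (norm_nonneg _)
          _ = κm * dist x x' := by rw [dist_eq_norm]
      have h4 : dist y' y = dist y y' := dist_comm _ _
      simp only
      rw [hzd]
      linarith
    refine LipschitzOnWith.of_dist_le_mul ?_
    intro p hp q hq
    simp only [hρR]
    have k1 := key p hp q hq
    have k2 := key q hq p hp
    rw [dist_comm q.1 p.1, dist_comm q.2 p.2] at k2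
    have hd1 : dist p.1 q.1 ≤ dist p q := le_max_left _ _
    have hd2 : dist p.2 q.2 ≤ dist p q := le_max_right _ _
    have hdnn : (0:ℝ) ≤ dist p q := dist_nonneg
    change _ ≤ (κm + 1) * dist p q
    rw [Real.dist_eq, abs_sub_le_iff]
    constructor <;> push_cast <;> nlinarith
end
end

section
/- Let Γ: ℝⁿ ⇒ ℝᵐ be a set-valued mapping with closed graph, let C ⊆ ℝⁿ be nonempty and closed, and define Ψ: ℝⁿ ⇒ ℝᵐ × ℝⁿ by Ψ(x) := Γ(x) × (x − C). Then for every (x̄,(ȳ,z̄)) ∈ gph Ψ and all y* ∈ ℝᵐ, z* ∈ ℝⁿ: if z* ∈ N_C(x̄ − z̄), then D*Ψ(x̄,(ȳ,z̄))(y*,z*) = D*Γ(x̄,ȳ)(y*) + z*, and otherwise D*Ψ(x̄,(ȳ,z̄))(y*,z*) = ∅. -/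
open Filter Topology RealInnerProductSpace
open scoped ENNReal NNReal

noncomputable section

/-! ### Auxiliary lemmas for the product rule -/

set_option linter.unusedSectionVars false
section Aux
variable {E F : Type*} [NormedAddCommGroup E] [InnerProductSpace ℝ E]
  [NormedAddCommGroup F] [InnerProductSpace ℝ F]

lemma pl2_eta (q : WithLp 2 (E × F)) : pl2 q.fst q.snd = q := rfl

lemma pl2_sub (a c : E) (b d : F) : pl2 a b - pl2 c d = pl2 (a - c) (b - d) := rfl

lemma neg_pl2 (a : E) (b : F) : -pl2 a b = pl2 (-a) (-b) := rfl

lemma inner_pl2 (a c : E) (b d : F) : ⟪pl2 a b, pl2 c d⟫ = ⟪a, c⟫ + ⟪b, d⟫ := rfl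

lemma norm_fst_le' (q : WithLp 2 (E × F)) : ‖q.fst‖ ≤ ‖q‖ := by
  have h := WithLp.prod_norm_sq_eq_of_L2 q
  nlinarith [norm_nonneg q, norm_nonneg q.fst, norm_nonneg q.snd]

lemma norm_snd_le' (q : WithLp 2 (E × F)) : ‖q.snd‖ ≤ ‖q‖ := by
  have h := WithLp.prod_norm_sq_eq_of_L2 q
  nlinarith [norm_nonneg q, norm_nonneg q.fst, norm_nonneg q.snd]

lemma norm_left_le_pl2 (a : E) (b : F) : ‖a‖ ≤ ‖pl2 a b‖ := norm_fst_le' (pl2 a b)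

lemma norm_right_le_pl2 (a : E) (b : F) : ‖b‖ ≤ ‖pl2 a b‖ := norm_snd_le' (pl2 a b)

lemma norm_pl2_le (a : E) (b : F) : ‖pl2 a b‖ ≤ ‖a‖ + ‖b‖ := by
  have h := WithLp.prod_norm_sq_eq_of_L2 (pl2 a b)
  simp only [pl2] at h
  change _ = ‖a‖ ^ 2 + ‖b‖ ^ 2 at h
  simp only [pl2]
  nlinarith [norm_nonneg ((WithLp.equiv 2 (E × F)).symm (a, b)), norm_nonneg a, norm_nonneg b,
    mul_nonneg (norm_nonneg a) (norm_nonneg b)]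

lemma norm_pl2_zero_left (b : F) : ‖pl2 (0 : E) b‖ = ‖b‖ :=
  WithLp.norm_toLp_snd 2 E F b

lemma tendsto_pl2_fst {f : ℕ → WithLp 2 (E × F)} {p} (h : Tendsto f atTop (𝓝 p)) :
    Tendsto (fun k => (f k).fst) atTop (𝓝 p.fst) :=
  ((continuous_fst.comp (WithLp.prodContinuousLinearEquiv 2 ℝ E F).continuous).tendsto p).comp h

lemma tendsto_pl2_snd {f : ℕ → WithLp 2 (E × F)} {p} (h : Tendsto f atTop (𝓝 p)) :
    Tendsto (fun k => (f k).snd) atTop (𝓝 p.snd) :=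
  ((continuous_snd.comp (WithLp.prodContinuousLinearEquiv 2 ℝ E F).continuous).tendsto p).comp h

lemma tendsto_pl2 {f : ℕ → E} {g : ℕ → F} {a b} (h1 : Tendsto f atTop (𝓝 a))
    (h2 : Tendsto g atTop (𝓝 b)) :
    Tendsto (fun k => pl2 (f k) (g k)) atTop (𝓝 (pl2 a b)) :=
  ((WithLp.prodContinuousLinearEquiv 2 ℝ E F).symm.continuous.tendsto (a, b)).comp
    (h1.prodMk_nhds h2)

variable {Γ : E → Set F} {C : Set E} {Ψ : E → Set (WithLp 2 (F × E))}

lemma mem_svGraph_psi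
    (hΨ : ∀ x, Ψ x = {p : WithLp 2 (F × E) |
      (WithLp.equiv 2 (F × E) p).1 ∈ Γ x ∧ x - (WithLp.equiv 2 (F × E) p).2 ∈ C})
    (q : WithLp 2 (E × WithLp 2 (F × E))) :
    q ∈ svGraph Ψ ↔ q.snd.fst ∈ Γ q.fst ∧ q.fst - q.snd.snd ∈ C := by
  simp only [svGraph, Set.mem_setOf_eq, hΨ]
  exact Iff.rfl

lemma mem_svGraph (Φ : E → Set F) (q : WithLp 2 (E × F)) :
    q ∈ svGraph Φ ↔ q.snd ∈ Φ q.fst := by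
  simp only [svGraph, Set.mem_setOf_eq]
  exact Iff.rfl

lemma inner3 (u x : E) (v y : F) (w z : E) :
    ⟪pl2 u (pl2 v w), pl2 x (pl2 y z)⟫ = ⟪u, x⟫ + ⟪v, y⟫ + ⟪w, z⟫ := by
  rw [inner_pl2, inner_pl2, add_assoc]

lemma frechet_psi_iff
    (hΨ : ∀ x, Ψ x = {p : WithLp 2 (F × E) |
      (WithLp.equiv 2 (F × E) p).1 ∈ Γ x ∧ x - (WithLp.equiv 2 (F × E) p).2 ∈ C})
    (x z u w : E) (y v : F) :
    pl2 u (pl2 v w) ∈ frechetNC (svGraph Ψ) (pl2 x (pl2 y z)) ↔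
      (pl2 (u + w) v ∈ frechetNC (svGraph Γ) (pl2 x y) ∧ -w ∈ frechetNC C (x - z)) := by
  constructor
  · rintro ⟨hmem, hball⟩
    rw [mem_svGraph_psi hΨ] at hmem
    simp only [pl2, WithLp.equiv_symm_apply, WithLp.toLp_fst, WithLp.toLp_snd] at hmem
    obtain ⟨hyΓ, hzC⟩ := hmem
    refine ⟨⟨(mem_svGraph Γ _).2 hyΓ, ?_⟩, hzC, ?_⟩
    · -- Γ part
      intro ε hε
      obtain ⟨δ, hδ, hδball⟩ := hball (ε / 3) (by positivity)
      refine ⟨δ / 3, by positivity, ?_⟩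
      intro q hq hqnorm
      set x' := q.fst with hx'
      set y' := q.snd with hy'
      have hqΓ : y' ∈ Γ x' := (mem_svGraph Γ q).1 hq
      set Q : WithLp 2 (E × WithLp 2 (F × E)) := pl2 x' (pl2 y' (z + (x' - x))) with hQ
      have hQmem : Q ∈ svGraph Ψ := by
        rw [mem_svGraph_psi hΨ]
        refine ⟨hqΓ, ?_⟩
        show x' - (z + (x' - x)) ∈ C
        have : x' - (z + (x' - x)) = x - z := by abel
        rwa [this]
      have hsub : Q - pl2 x (pl2 y z) = pl2 (x' - x) (pl2 (y' - y) (x' - x)) := by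
        rw [hQ, pl2_sub, pl2_sub]
        have h9 : z + (x' - x) - z = x' - x := by abel
        rw [h9]
      have hqsub : q - pl2 x y = pl2 (x' - x) (y' - y) := by
        rw [← pl2_eta q, pl2_sub]
      have h1 : ‖x' - x‖ ≤ ‖q - pl2 x y‖ := by
        rw [hqsub]
        exact norm_left_le_pl2 _ _
      have h2 : ‖y' - y‖ ≤ ‖q - pl2 x y‖ := by
        rw [hqsub]
        exact norm_right_le_pl2 _ _
      have hQnorm : ‖Q - pl2 x (pl2 y z)‖ ≤ 3 * ‖q - pl2 x y‖ := by
        rw [hsub]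
        calc ‖pl2 (x' - x) (pl2 (y' - y) (x' - x))‖
            ≤ ‖x' - x‖ + ‖pl2 (y' - y) (x' - x)‖ := norm_pl2_le _ _
          _ ≤ ‖x' - x‖ + (‖y' - y‖ + ‖x' - x‖) := by
              have := norm_pl2_le (y' - y) (x' - x)
              linarith
          _ ≤ 3 * ‖q - pl2 x y‖ := by linarith
      have hkey := hδball Q hQmem (by linarith)
      have hinner : ⟪pl2 u (pl2 v w), Q - pl2 x (pl2 y z)⟫
          = ⟪pl2 (u + w) v, q - pl2 x y⟫ := by
        rw [hsub, hqsub, inner3, inner_pl2, inner_add_left]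
        ring
      rw [hinner] at hkey
      have : ε / 3 * ‖Q - pl2 x (pl2 y z)‖ ≤ ε / 3 * (3 * ‖q - pl2 x y‖) := by
        apply mul_le_mul_of_nonneg_left hQnorm (by positivity)
      linarith
    · -- C part
      intro ε hε
      obtain ⟨δ, hδ, hδball⟩ := hball ε hε
      refine ⟨δ, hδ, ?_⟩
      intro c hc hcnorm
      set Q : WithLp 2 (E × WithLp 2 (F × E)) := pl2 x (pl2 y (x - c)) with hQ
      have hQmem : Q ∈ svGraph Ψ := by
        rw [mem_svGraph_psi hΨ]
        refine ⟨hyΓ, ?_⟩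
        show x - (x - c) ∈ C
        rwa [sub_sub_cancel]
      have hsub : Q - pl2 x (pl2 y z) = pl2 0 (pl2 0 ((x - c) - z)) := by
        rw [hQ, pl2_sub, pl2_sub, sub_self, sub_self]
      have heq : (x - c) - z = -(c - (x - z)) := by abel
      have hQnorm : ‖Q - pl2 x (pl2 y z)‖ = ‖c - (x - z)‖ := by
        rw [hsub, norm_pl2_zero_left, norm_pl2_zero_left, heq, norm_neg]
      have hkey := hδball Q hQmem (by rw [hQnorm]; exact hcnorm)
      have hinner : ⟪pl2 u (pl2 v w), Q - pl2 x (pl2 y z)⟫ = ⟪-w, c - (x - z)⟫ := by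
        rw [hsub, inner3, heq, inner_zero_right, inner_zero_right, inner_neg_right,
          ← inner_neg_left]
        ring
      rw [hinner, hQnorm] at hkey
      exact hkey
  · rintro ⟨⟨hΓmem, hΓball⟩, hCmem, hCball⟩
    have hyΓ : y ∈ Γ x := (mem_svGraph Γ _).1 hΓmem
    refine ⟨(mem_svGraph_psi hΨ _).2 ⟨hyΓ, hCmem⟩, ?_⟩
    intro ε hε
    obtain ⟨δ₁, hδ₁, hball₁⟩ := hΓball (ε / 4) (by positivity)
    obtain ⟨δ₂, hδ₂, hball₂⟩ := hCball (ε / 4) (by positivity)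
    refine ⟨min (δ₁ / 2) (δ₂ / 2), by positivity, ?_⟩
    intro Q hQ hQnorm
    set x' := Q.fst with hx'
    set y' := Q.snd.fst with hy'
    set z' := Q.snd.snd with hz'
    obtain ⟨hQ1, hQ2⟩ := (mem_svGraph_psi hΨ Q).1 hQ
    have hsub : Q - pl2 x (pl2 y z) = pl2 (x' - x) (pl2 (y' - y) (z' - z)) := by
      conv_lhs => rw [← pl2_eta Q, ← pl2_eta Q.snd]
      rfl
    have h1 : ‖x' - x‖ ≤ ‖Q - pl2 x (pl2 y z)‖ := by
      rw [hsub]; exact norm_left_le_pl2 _ _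
    have h2 : ‖y' - y‖ ≤ ‖Q - pl2 x (pl2 y z)‖ := by
      rw [hsub]
      exact le_trans (norm_left_le_pl2 (y' - y) (z' - z))
        (norm_right_le_pl2 (x' - x) (pl2 (y' - y) (z' - z)))
    have h3 : ‖z' - z‖ ≤ ‖Q - pl2 x (pl2 y z)‖ := by
      rw [hsub]
      exact le_trans (norm_right_le_pl2 (y' - y) (z' - z))
        (norm_right_le_pl2 (x' - x) (pl2 (y' - y) (z' - z)))
    have hδQ1 : ‖Q - pl2 x (pl2 y z)‖ < δ₁ / 2 := lt_of_lt_of_le hQnorm (min_le_left _ _)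
    have hδQ2 : ‖Q - pl2 x (pl2 y z)‖ < δ₂ / 2 := lt_of_lt_of_le hQnorm (min_le_right _ _)
    -- Γ estimate
    have hqΓsub : pl2 x' y' - pl2 x y = pl2 (x' - x) (y' - y) := pl2_sub _ _ _ _
    have hqΓnorm : ‖pl2 x' y' - pl2 x y‖ ≤ 2 * ‖Q - pl2 x (pl2 y z)‖ := by
      rw [hqΓsub]
      have := norm_pl2_le (x' - x) (y' - y)
      linarith
    have hkey₁ := hball₁ (pl2 x' y') ((mem_svGraph Γ _).2 hQ1) (by linarith)
    rw [hqΓsub, inner_pl2] at hkey₁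
    -- C estimate
    have hcC : x' - z' ∈ C := hQ2
    have hcnorm : ‖(x' - z') - (x - z)‖ ≤ 2 * ‖Q - pl2 x (pl2 y z)‖ := by
      have : (x' - z') - (x - z) = (x' - x) - (z' - z) := by abel
      rw [this]
      have := norm_sub_le (x' - x) (z' - z)
      linarith
    have hkey₂ := hball₂ (x' - z') hcC (by linarith)
    -- combine
    have hinner : ⟪pl2 u (pl2 v w), Q - pl2 x (pl2 y z)⟫
        = (⟪u + w, x' - x⟫ + ⟪v, y' - y⟫) + ⟪-w, (x' - z') - (x - z)⟫ := by
      rw [hsub, inner3, inner_add_left, inner_neg_left]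
      have : (x' - z') - (x - z) = (x' - x) - (z' - z) := by abel
      rw [this, inner_sub_right, inner_sub_right w (x' - x) (z' - z)]
      ring
    rw [hinner]
    have e1 : ε / 4 * ‖pl2 x' y' - pl2 x y‖ ≤ ε / 4 * (2 * ‖Q - pl2 x (pl2 y z)‖) :=
      mul_le_mul_of_nonneg_left hqΓnorm (by positivity)
    have e2 : ε / 4 * ‖(x' - z') - (x - z)‖ ≤ ε / 4 * (2 * ‖Q - pl2 x (pl2 y z)‖) :=
      mul_le_mul_of_nonneg_left hcnorm (by positivity)
    have hkey₁' : ⟪u + w, x' - x⟫ + ⟪v, y' - y⟫ ≤ ε / 4 * ‖pl2 x' y' - pl2 x y‖ := hkey₁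
    linarith

lemma limiting_psi_iff
    (hΨ : ∀ x, Ψ x = {p : WithLp 2 (F × E) |
      (WithLp.equiv 2 (F × E) p).1 ∈ Γ x ∧ x - (WithLp.equiv 2 (F × E) p).2 ∈ C})
    (x z u w : E) (y v : F) :
    pl2 u (pl2 v w) ∈ limitingNC (svGraph Ψ) (pl2 x (pl2 y z)) ↔
      (pl2 (u + w) v ∈ limitingNC (svGraph Γ) (pl2 x y) ∧ -w ∈ limitingNC C (x - z)) := by
  constructor
  · rintro ⟨pk, nk, hpmem, hptend, hnmem, hntend⟩
    have hcomp : ∀ k, pl2 ((nk k).fst + (nk k).snd.snd) (nk k).snd.fst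
          ∈ frechetNC (svGraph Γ) (pl2 (pk k).fst (pk k).snd.fst)
        ∧ -(nk k).snd.snd ∈ frechetNC C ((pk k).fst - (pk k).snd.snd) := by
      intro k
      have := hnmem k
      rw [← pl2_eta (nk k), ← pl2_eta (nk k).snd, ← pl2_eta (pk k), ← pl2_eta (pk k).snd]
        at this
      exact (frechet_psi_iff hΨ _ _ _ _ _ _).1 this
    constructor
    · refine ⟨fun k => pl2 (pk k).fst (pk k).snd.fst,
        fun k => pl2 ((nk k).fst + (nk k).snd.snd) (nk k).snd.fst, ?_, ?_, ?_, ?_⟩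
      · intro k
        exact ((hcomp k).1).1
      · exact tendsto_pl2 (tendsto_pl2_fst hptend) (tendsto_pl2_fst (tendsto_pl2_snd hptend))
      · intro k
        exact (hcomp k).1
      · exact tendsto_pl2 ((tendsto_pl2_fst hntend).add
          (tendsto_pl2_snd (tendsto_pl2_snd hntend)))
          (tendsto_pl2_fst (tendsto_pl2_snd hntend))
    · refine ⟨fun k => (pk k).fst - (pk k).snd.snd, fun k => -(nk k).snd.snd, ?_, ?_, ?_, ?_⟩
      · intro k
        exact ((hcomp k).2).1
      · exact (tendsto_pl2_fst hptend).sub (tendsto_pl2_snd (tendsto_pl2_snd hptend))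
      · intro k
        exact (hcomp k).2
      · exact (tendsto_pl2_snd (tendsto_pl2_snd hntend)).neg
  · rintro ⟨⟨ak, bk, hamem, hatend, hbmem, hbtend⟩, ⟨ck, dk, hcmem, hctend, hdmem, hdtend⟩⟩
    refine ⟨fun k => pl2 (ak k).fst (pl2 (ak k).snd ((ak k).fst - ck k)),
      fun k => pl2 ((bk k).fst + dk k) (pl2 (bk k).snd (-(dk k))), ?_, ?_, ?_, ?_⟩
    · intro k
      rw [mem_svGraph_psi hΨ]
      constructor
      · show (ak k).snd ∈ Γ (ak k).fst
        exact (mem_svGraph Γ _).1 (hamem k)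
      · show (ak k).fst - ((ak k).fst - ck k) ∈ C
        rw [sub_sub_cancel]
        exact hcmem k
    · have hh := tendsto_pl2 (tendsto_pl2_fst hatend)
        (tendsto_pl2 (tendsto_pl2_snd hatend) ((tendsto_pl2_fst hatend).sub hctend))
      rw [show z = x - (x - z) from (sub_sub_cancel x z).symm]
      exact hh
    · intro k
      apply (frechet_psi_iff hΨ _ _ _ _ _ _).2
      constructor
      · have : (bk k).fst + dk k + -(dk k) = (bk k).fst := by abel
        rw [this, pl2_eta]
        exact hbmem k
      · rw [neg_neg, sub_sub_cancel]
        exact hdmem k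
    · have h1 : Tendsto (fun k => (bk k).fst + dk k) atTop (𝓝 u) := by
        have := (tendsto_pl2_fst hbtend).add hdtend
        have h9 : (pl2 (u + w) v).fst + -w = u := by
          show u + w + -w = u
          abel
        rwa [h9] at this
      have h2 : Tendsto (fun k => (bk k).snd) atTop (𝓝 v) := tendsto_pl2_snd hbtend
      have h3 : Tendsto (fun k => -(dk k)) atTop (𝓝 w) := by
        have := hdtend.neg
        simpa using this
      exact tendsto_pl2 h1 (tendsto_pl2 h2 h3)

end Aux

theorem coderivative_product_rule (n m : ℕ)
    (Γ : EuclideanSpace ℝ (Fin n) → Set (EuclideanSpace ℝ (Fin m)))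
    (hΓ : IsClosed (svGraph Γ))
    (C : Set (EuclideanSpace ℝ (Fin n))) (hCne : C.Nonempty) (hCcl : IsClosed C)
    (Ψ : EuclideanSpace ℝ (Fin n) →
      Set (WithLp 2 (EuclideanSpace ℝ (Fin m) × EuclideanSpace ℝ (Fin n))))
    (hΨ : ∀ x, Ψ x = {p | (WithLp.equiv 2 (EuclideanSpace ℝ (Fin m) × EuclideanSpace ℝ (Fin n)) p).1 ∈ Γ x ∧
        x - (WithLp.equiv 2 (EuclideanSpace ℝ (Fin m) × EuclideanSpace ℝ (Fin n)) p).2 ∈ C})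
    (xb : EuclideanSpace ℝ (Fin n)) (yb : EuclideanSpace ℝ (Fin m))
    (zb : EuclideanSpace ℝ (Fin n)) (hy : yb ∈ Γ xb) (hz : xb - zb ∈ C)
    (ys : EuclideanSpace ℝ (Fin m)) (zs : EuclideanSpace ℝ (Fin n)) :
    (zs ∈ limitingNC C (xb - zb) →
      coderiv Ψ xb (pl2 yb zb) (pl2 ys zs) = (fun u => u + zs) '' coderiv Γ xb yb ys) ∧
    (zs ∉ limitingNC C (xb - zb) →
      coderiv Ψ xb (pl2 yb zb) (pl2 ys zs) = ∅) := by
  have key : ∀ xs : EuclideanSpace ℝ (Fin n),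
      xs ∈ coderiv Ψ xb (pl2 yb zb) (pl2 ys zs) ↔
      (xs - zs ∈ coderiv Γ xb yb ys ∧ zs ∈ limitingNC C (xb - zb)) := by
    intro xs
    have hneg : -pl2 ys zs = pl2 (-ys) (-zs) := rfl
    show pl2 xs (-pl2 ys zs) ∈ limitingNC (svGraph Ψ) (pl2 xb (pl2 yb zb)) ↔ _
    rw [hneg, limiting_psi_iff hΨ]
    constructor
    · rintro ⟨h1, h2⟩
      refine ⟨?_, by simpa using h2⟩
      show pl2 (xs - zs) (-ys) ∈ limitingNC (svGraph Γ) (pl2 xb yb)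
      simpa [sub_eq_add_neg] using h1
    · rintro ⟨h1, h2⟩
      refine ⟨?_, by simpa using h2⟩
      have h1' : pl2 (xs - zs) (-ys) ∈ limitingNC (svGraph Γ) (pl2 xb yb) := h1
      simpa [sub_eq_add_neg] using h1'
  constructor
  · intro hzs
    ext xs
    rw [Set.mem_image]
    constructor
    · intro h
      obtain ⟨h1, _⟩ := (key xs).1 h
      exact ⟨xs - zs, h1, by abel⟩
    · rintro ⟨a, ha, rfl⟩
      exact (key _).2 ⟨by simpa using ha, hzs⟩
  · intro hzs
    ext xs
    simp only [Set.mem_empty_iff_false, iff_false]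
    intro h
    exact hzs ((key xs).1 h).2
end
end

section
/- Let x̄ ∈ M and suppose sequences {x_k},{ε_k} ⊆ ℝⁿ and {y_k},{λ_k} ⊆ ℝᵐ satisfy x_k → x̄, ε_k → 0, y_k → 0 and ε_k ∈ ∂f(x_k) + D*Φ(x_k,y_k)(λ_k) for all k. If the sequence {λ_k} is unbounded, then there exists λ ∈ ℝᵐ with λ ≠ 0 and 0 ∈ D*Φ(x̄,0)(λ). -/
open Filter Topology RealInnerProductSpace
open scoped ENNReal NNReal

noncomputable section

section Aux
variable {E : Type*} [NormedAddCommGroup E] [InnerProductSpace ℝ E]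

lemma frechet_smul {A : Set E} {x v : E} {t : ℝ} (ht : 0 < t)
    (hv : v ∈ frechetNC A x) : t • v ∈ frechetNC A x := by
  obtain ⟨hx, H⟩ := hv
  refine ⟨hx, fun ε hε => ?_⟩
  obtain ⟨δ, hδ, Hδ⟩ := H (ε / t) (by positivity)
  refine ⟨δ, hδ, fun y hy hyd => ?_⟩
  rw [real_inner_smul_left]
  have := mul_le_mul_of_nonneg_left (Hδ y hy hyd) ht.le
  calc t * ⟪v, y - x⟫ ≤ t * (ε / t * ‖y - x‖) := this
    _ = ε * ‖y - x‖ := by field_simp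

lemma limiting_smul {A : Set E} {x v : E} {t : ℝ} (ht : 0 < t)
    (hv : v ∈ limitingNC A x) : t • v ∈ limitingNC A x := by
  obtain ⟨xk, vk, hmem, hxk, hfr, hvk⟩ := hv
  exact ⟨xk, fun k => t • vk k, hmem, hxk, fun k => frechet_smul ht (hfr k),
    hvk.const_smul t⟩

lemma limiting_robust {A : Set E} {p v : E} {pk vk : ℕ → E}
    (hmem : ∀ k, vk k ∈ limitingNC A (pk k))
    (hpk : Tendsto pk atTop (𝓝 p)) (hvk : Tendsto vk atTop (𝓝 v)) :
    v ∈ limitingNC A p := by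
  have hchoice : ∀ k : ℕ, ∃ q w : E, q ∈ A ∧ w ∈ frechetNC A q ∧
      dist q (pk k) < 1 / (k + 1) ∧ dist w (vk k) < 1 / (k + 1) := by
    intro k
    obtain ⟨qk, wk, hq, hqt, hw, hwt⟩ := hmem k
    have h1 : (0:ℝ) < 1 / (k + 1) := by positivity
    have hq' := (Metric.tendsto_atTop.mp hqt) _ h1
    have hw' := (Metric.tendsto_atTop.mp hwt) _ h1
    obtain ⟨N1, hN1⟩ := hq'; obtain ⟨N2, hN2⟩ := hw'
    exact ⟨qk (max N1 N2), wk (max N1 N2), hq _, hw _,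
      hN1 _ (le_max_left _ _), hN2 _ (le_max_right _ _)⟩
  choose Q W hQA hWfr hQd hWd using hchoice
  have hone : Tendsto (fun k : ℕ => 1 / ((k:ℝ) + 1)) atTop (𝓝 0) :=
    tendsto_one_div_add_atTop_nhds_zero_nat
  have hQt : Tendsto Q atTop (𝓝 p) := by
    rw [tendsto_iff_dist_tendsto_zero]
    refine squeeze_zero (g := fun k : ℕ => 1 / ((k:ℝ)+1) + dist (pk k) p)
      (fun k => dist_nonneg) (fun k => ?_) ?_
    · exact (dist_triangle (Q k) (pk k) p).trans
        (add_le_add (hQd k).le le_rfl)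
    · have := hone.add ((tendsto_iff_dist_tendsto_zero.mp hpk))
      simpa using this
  have hWt : Tendsto W atTop (𝓝 v) := by
    rw [tendsto_iff_dist_tendsto_zero]
    refine squeeze_zero (g := fun k : ℕ => 1 / ((k:ℝ)+1) + dist (vk k) v)
      (fun k => dist_nonneg) (fun k => ?_) ?_
    · exact (dist_triangle (W k) (vk k) v).trans
        (add_le_add (hWd k).le le_rfl)
    · have := hone.add ((tendsto_iff_dist_tendsto_zero.mp hvk))
      simpa using this
  exact ⟨Q, W, hQA, hQt, hWfr, hWt⟩

lemma frechet_dir {A : Set E} {x v u : E} (hv : v ∈ frechetNC A x)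
    {t₀ : ℝ} (ht₀ : 0 < t₀) (h : ∀ t : ℝ, 0 < t → t ≤ t₀ → x + t • u ∈ A) :
    ⟪v, u⟫ ≤ 0 := by
  obtain ⟨hx, H⟩ := hv
  have key : ∀ ε > (0:ℝ), ⟪v, u⟫ ≤ ε * ‖u‖ := by
    intro ε hε
    obtain ⟨δ, hδ, Hδ⟩ := H ε hε
    set t := min t₀ (δ / (2 * (‖u‖ + 1))) with htdef
    have htpos : 0 < t := lt_min ht₀ (by positivity)
    have hmem := h t htpos (min_le_left _ _)
    have hnorm : ‖x + t • u - x‖ = t * ‖u‖ := by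
      rw [add_sub_cancel_left, norm_smul, Real.norm_eq_abs, abs_of_pos htpos]
    have hlt : t * ‖u‖ < δ := by
      have h1 : t ≤ δ / (2 * (‖u‖ + 1)) := min_le_right _ _
      have h2 : ‖u‖ < ‖u‖ + 1 := by linarith
      have h3 : t * ‖u‖ ≤ δ / (2 * (‖u‖ + 1)) * ‖u‖ :=
        mul_le_mul_of_nonneg_right h1 (norm_nonneg u)
      have h4 : δ / (2 * (‖u‖ + 1)) * ‖u‖ < δ := by
        rw [div_mul_eq_mul_div, div_lt_iff₀ (by positivity)]
        nlinarith [norm_nonneg u]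
      linarith
    have := Hδ (x + t • u) hmem (by rw [hnorm]; exact hlt)
    rw [add_sub_cancel_left, real_inner_smul_right, norm_smul,
      Real.norm_eq_abs, abs_of_pos htpos] at this
    have h6 : t * ⟪v, u⟫ ≤ t * (ε * ‖u‖) := by rw [mul_comm ε]; linarith [this]
    exact (mul_le_mul_iff_right₀ htpos).mp h6
  by_contra hc
  push_neg at hc
  rcases eq_or_ne u 0 with hu | hu
  · simp [hu, inner_zero_right] at hc
  · have hun : 0 < ‖u‖ := norm_pos_iff.mpr hu
    have := key (⟪v, u⟫ / (2 * ‖u‖)) (by positivity)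
    rw [div_mul_eq_mul_div] at this
    have h5 : ⟪v, u⟫ * ‖u‖ / (2 * ‖u‖) = ⟪v, u⟫ / 2 := by
      field_simp
    rw [h5] at this
    linarith

lemma pl2_fst {F : Type*} [NormedAddCommGroup F] [InnerProductSpace ℝ F]
    (u : E) (w : F) : (pl2 u w).fst = u := rfl
lemma pl2_snd {F : Type*} [NormedAddCommGroup F] [InnerProductSpace ℝ F]
    (u : E) (w : F) : (pl2 u w).snd = w := rfl

lemma tendsto_pl2_s6 {F : Type*} [NormedAddCommGroup F] [InnerProductSpace ℝ F]
    {uk : ℕ → E} {wk : ℕ → F} {u : E} {w : F}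
    (hu : Tendsto uk atTop (𝓝 u)) (hw : Tendsto wk atTop (𝓝 w)) :
    Tendsto (fun k => pl2 (uk k) (wk k)) atTop (𝓝 (pl2 u w)) :=
  ((WithLp.prodContinuousLinearEquiv 2 ℝ E F).symm.continuous.tendsto _).comp
    (hu.prodMk_nhds hw)

lemma tendsto_fst_of_pl2 {F : Type*} [NormedAddCommGroup F] [InnerProductSpace ℝ F]
    {pk : ℕ → WithLp 2 (E × F)} {p : WithLp 2 (E × F)}
    (h : Tendsto pk atTop (𝓝 p)) : Tendsto (fun k => (pk k).fst) atTop (𝓝 p.fst) := by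
  have := ((WithLp.prodContinuousLinearEquiv 2 ℝ E F).continuous.tendsto _).comp h
  exact (continuous_fst.tendsto _).comp this

lemma tendsto_snd_of_pl2 {F : Type*} [NormedAddCommGroup F] [InnerProductSpace ℝ F]
    {pk : ℕ → WithLp 2 (E × F)} {p : WithLp 2 (E × F)}
    (h : Tendsto pk atTop (𝓝 p)) : Tendsto (fun k => (pk k).snd) atTop (𝓝 p.snd) := by
  have := ((WithLp.prodContinuousLinearEquiv 2 ℝ E F).continuous.tendsto _).comp h
  exact (continuous_snd.tendsto _).comp this

lemma subdiff_bound {f : E → ℝ} {x : E} {L r : ℝ} (hL : 0 ≤ L) (hr : 0 < r)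
    (hlip : ∀ y ∈ Metric.ball x r, ∀ z ∈ Metric.ball x r, f y - f z ≤ L * ‖y - z‖)
    {a : E} (ha : a ∈ limSubdiff f x) : ‖a‖ ≤ L := by
  obtain ⟨pk, wk, hmem, hpkt, hfr, hwkt⟩ := ha
  set S : Set (WithLp 2 (E × ℝ)) :=
    {p : WithLp 2 (E × ℝ) | f (WithLp.equiv 2 (E × ℝ) p).1 ≤ (WithLp.equiv 2 (E × ℝ) p).2}
  have hu : Tendsto (fun k => (pk k).fst) atTop (𝓝 x) := by
    have := tendsto_fst_of_pl2 hpkt; rwa [pl2_fst] at this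
  have hv : Tendsto (fun k => (wk k).fst) atTop (𝓝 a) := by
    have := tendsto_fst_of_pl2 hwkt; rwa [pl2_fst] at this
  have hβ : Tendsto (fun k => (wk k).snd) atTop (𝓝 (-1 : ℝ)) := by
    have := tendsto_snd_of_pl2 hwkt; rwa [pl2_snd] at this
  have hball : ∀ᶠ k in atTop, (pk k).fst ∈ Metric.ball x (r/2) :=
    hu (Metric.ball_mem_nhds x (by positivity))
  have hkey : ∀ k, (pk k).fst ∈ Metric.ball x (r/2) →
      ‖(wk k).fst‖ ≤ -(wk k).snd * L := by
    intro k hk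
    have hpkS : f ((pk k).fst) ≤ (pk k).snd := hmem k
    have hβle : (wk k).snd ≤ 0 := by
      have hdir0 := frechet_dir (hfr k) (one_pos) (u := pl2 (0 : E) (1 : ℝ)) ?_
      · simpa [WithLp.prod_inner_apply, pl2_fst, pl2_snd] using hdir0
      · intro t ht _
        have h3 : f ((pk k + t • pl2 (0:E) (1:ℝ)).fst)
            ≤ (pk k + t • pl2 (0:E) (1:ℝ)).snd := by
          have h1 : (pk k + t • pl2 (0:E) (1:ℝ)).fst = (pk k).fst := by
            show (pk k).fst + t • (0:E) = (pk k).fst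
            simp
          have h2 : (pk k + t • pl2 (0:E) (1:ℝ)).snd = (pk k).snd + t := by
            show (pk k).snd + t • (1:ℝ) = (pk k).snd + t
            simp
          rw [h1, h2]; linarith
        exact h3
    have hdir : ∀ d : E, ⟪(wk k).fst, d⟫ + (wk k).snd * (L * ‖d‖) ≤ 0 := by
      intro d
      have ht₀ : (0:ℝ) < r / (2 * (‖d‖ + 1)) := by positivity
      have hdird := frechet_dir (hfr k) ht₀ (u := pl2 d (L * ‖d‖)) ?_
      · have h := hdird
        simp [WithLp.prod_inner_apply, pl2_fst, pl2_snd] at h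
        linarith [h]
      · intro t ht htle
        have htd : t * ‖d‖ < r / 2 := by
          have h3 : t * ‖d‖ ≤ r / (2 * (‖d‖ + 1)) * ‖d‖ :=
            mul_le_mul_of_nonneg_right htle (norm_nonneg d)
          have h4 : r / (2 * (‖d‖ + 1)) * ‖d‖ < r / 2 := by
            rw [div_mul_eq_mul_div, div_lt_iff₀ (by positivity)]
            nlinarith [norm_nonneg d]
          linarith
        have hin : (pk k).fst + t • d ∈ Metric.ball x r := by
          have htri := dist_triangle ((pk k).fst + t • d) ((pk k).fst) x
          have hd : dist ((pk k).fst + t • d) ((pk k).fst) = t * ‖d‖ := by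
            rw [dist_eq_norm, add_sub_cancel_left, norm_smul,
              Real.norm_eq_abs, abs_of_pos ht]
          have hk' : dist ((pk k).fst) x < r / 2 := Metric.mem_ball.mp hk
          exact Metric.mem_ball.mpr (by rw [hd] at htri; linarith)
        have hin2 : (pk k).fst ∈ Metric.ball x r :=
          Metric.ball_subset_ball (by linarith) hk
        have hflip : f ((pk k).fst + t • d) - f ((pk k).fst)
            ≤ L * ‖(pk k).fst + t • d - (pk k).fst‖ := hlip _ hin _ hin2
        rw [add_sub_cancel_left, norm_smul, Real.norm_eq_abs, abs_of_pos ht] at hflip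
        have h3 : f ((pk k + t • pl2 d (L * ‖d‖)).fst)
            ≤ (pk k + t • pl2 d (L * ‖d‖)).snd := by
          have h1 : (pk k + t • pl2 d (L * ‖d‖)).fst = (pk k).fst + t • d := rfl
          have h2 : (pk k + t • pl2 d (L * ‖d‖)).snd
              = (pk k).snd + t * (L * ‖d‖) := rfl
          rw [h1, h2]
          have h5 : L * (t * ‖d‖) = t * (L * ‖d‖) := by ring
          linarith
        exact h3
    have hd := hdir (wk k).fst
    rw [real_inner_self_eq_norm_sq] at hd
    rcases eq_or_lt_of_le (norm_nonneg (wk k).fst) with h0 | h0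
    · rw [← h0]
      exact mul_nonneg (neg_nonneg.mpr hβle) hL
    · have h6 : ‖(wk k).fst‖ * ‖(wk k).fst‖ ≤ (-(wk k).snd * L) * ‖(wk k).fst‖ := by
        nlinarith
      exact le_of_mul_le_mul_right h6 h0
  have hev : ∀ᶠ k in atTop, ‖(wk k).fst‖ ≤ -(wk k).snd * L :=
    hball.mono fun k hk => hkey k hk
  have h1 : Tendsto (fun k => ‖(wk k).fst‖) atTop (𝓝 ‖a‖) := hv.norm
  have h2 : Tendsto (fun k => -(wk k).snd * L) atTop (𝓝 L) := by
    have := (hβ.neg).mul_const L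
    simpa using this
  exact le_of_tendsto_of_tendsto h1 h2 hev

end Aux

theorem AM_stationary_unbounded_multipliers (n m : ℕ)
    (f : EuclideanSpace ℝ (Fin n) → ℝ) (hf : LocallyLipschitz f)
    (Φ : EuclideanSpace ℝ (Fin n) → Set (EuclideanSpace ℝ (Fin m)))
    (hΦ : IsClosed (svGraph Φ))
    (xb : EuclideanSpace ℝ (Fin n)) (hfeas : 0 ∈ Φ xb)
    (xk εk : ℕ → EuclideanSpace ℝ (Fin n)) (yk lk : ℕ → EuclideanSpace ℝ (Fin m))
    (hxk : Tendsto xk atTop (𝓝 xb)) (hek : Tendsto εk atTop (𝓝 0))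
    (hyk : Tendsto yk atTop (𝓝 0))
    (hst : ∀ k, ∃ a ∈ limSubdiff f (xk k), ∃ b ∈ coderiv Φ (xk k) (yk k) (lk k),
      εk k = a + b)
    (hub : ¬ ∃ Cb : ℝ, ∀ k, ‖lk k‖ ≤ Cb) :
    ∃ l : EuclideanSpace ℝ (Fin m), l ≠ 0 ∧
      (0 : EuclideanSpace ℝ (Fin n)) ∈ coderiv Φ xb 0 l := by
  classical
  push_neg at hub
  choose g hg using hub
  choose a ha b hb heq using hst
  obtain ⟨K, s, hs, hK⟩ := hf xb
  obtain ⟨r, hr, hrs⟩ := Metric.mem_nhds_iff.mp hs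
  -- index sequence with exploding multiplier norms
  set c : ℕ → ℕ := fun j =>
    Nat.rec (g 1) (fun j prev => g (max ((j:ℝ) + 2) ‖lk prev‖)) j with hcdef
  have hcs : ∀ j, c (j+1) = g (max ((j:ℝ) + 2) ‖lk (c j)‖) := fun j => rfl
  have hc1 : ∀ j : ℕ, ((j : ℝ) + 1) < ‖lk (c j)‖ := by
    intro j
    cases j with
    | zero =>
      show (((0:ℕ):ℝ) + 1) < ‖lk (g 1)‖
      simpa using hg 1
    | succ j =>
      have h1 := hg (max ((j:ℝ) + 2) ‖lk (c j)‖)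
      rw [← hcs j] at h1
      have h2 : ((j:ℝ) + 2) ≤ max ((j:ℝ) + 2) ‖lk (c j)‖ := le_max_left _ _
      push_cast
      linarith
  have hc2 : StrictMono fun j => ‖lk (c j)‖ := by
    apply strictMono_nat_of_lt_succ
    intro j
    have h1 := hg (max ((j:ℝ) + 2) ‖lk (c j)‖)
    rw [← hcs j] at h1
    exact lt_of_le_of_lt (le_max_right _ _) h1
  have hcinj : Function.Injective c := fun i j hij => hc2.injective (by rw [hij])
  have hctop : Tendsto c atTop atTop := by
    rw [← Nat.cofinite_eq_atTop]
    exact hcinj.tendsto_cofinite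
  have hnormpos : ∀ j, 0 < ‖lk (c j)‖ := fun j =>
    lt_of_le_of_lt (by positivity) (hc1 j)
  -- normalized multipliers and their limit
  set μ : ℕ → EuclideanSpace ℝ (Fin m) := fun j => ‖lk (c j)‖⁻¹ • lk (c j) with hμdef
  have hμmem : ∀ j, μ j ∈ Metric.sphere (0 : EuclideanSpace ℝ (Fin m)) 1 := by
    intro j
    rw [mem_sphere_zero_iff_norm]
    rw [hμdef]
    simp only [norm_smul, Real.norm_eq_abs, abs_of_pos (inv_pos.mpr (hnormpos j))]
    exact inv_mul_cancel₀ (hnormpos j).ne'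
  obtain ⟨l, hlmem, ψ, hψ, hμψ⟩ :=
    (isCompact_sphere (0 : EuclideanSpace ℝ (Fin m)) 1).tendsto_subseq hμmem
  have hlnorm : ‖l‖ = 1 := mem_sphere_zero_iff_norm.mp hlmem
  refine ⟨l, fun h => by rw [h] at hlnorm; simp at hlnorm, ?_⟩
  set d : ℕ → ℕ := fun j => c (ψ j) with hddef
  have hdtop : Tendsto d atTop atTop := hctop.comp hψ.tendsto_atTop
  -- scaled limiting normals
  have hscaled : ∀ j, pl2 (‖lk (d j)‖⁻¹ • b (d j)) (-(μ (ψ j)))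
      ∈ limitingNC (svGraph Φ) (pl2 (xk (d j)) (yk (d j))) := by
    intro j
    have h1 := hb (d j)
    have h2 := limiting_smul (inv_pos.mpr (hnormpos (ψ j))) h1
    have h4 : -(μ (ψ j)) = ‖lk (d j)‖⁻¹ • (-(lk (d j))) := by
      show -(‖lk (c (ψ j))‖⁻¹ • lk (c (ψ j)))
          = ‖lk (c (ψ j))‖⁻¹ • (-(lk (c (ψ j))))
      rw [smul_neg]
    rw [h4]
    have h5 : pl2 (‖lk (d j)‖⁻¹ • b (d j)) (‖lk (d j)‖⁻¹ • (-(lk (d j))))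
        = ‖lk (d j)‖⁻¹ • pl2 (b (d j)) (-(lk (d j))) := rfl
    rw [h5]
    exact h2
  -- the scaled subgradient part tends to zero
  have hεev : ∀ᶠ j in atTop, ‖εk (d j)‖ ≤ 1 := by
    have h1 : ∀ᶠ k in atTop, ‖εk k‖ ≤ 1 := by
      have := hek (Metric.closedBall_mem_nhds (0 : EuclideanSpace ℝ (Fin n)) one_pos)
      filter_upwards [this] with k hk
      simpa [dist_eq_norm] using Metric.mem_closedBall.mp hk
    exact hdtop.eventually h1
  have haev : ∀ᶠ j in atTop, ‖a (d j)‖ ≤ (K : ℝ) := by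
    have h1 : ∀ᶠ k in atTop, xk k ∈ Metric.ball xb (r/2) :=
      hxk (Metric.ball_mem_nhds xb (by positivity))
    have h2 : ∀ᶠ j in atTop, xk (d j) ∈ Metric.ball xb (r/2) := hdtop.eventually h1
    filter_upwards [h2] with j hj
    refine subdiff_bound (f := f) (x := xk (d j)) (L := (K:ℝ)) (r := r/2)
      K.coe_nonneg (by positivity) ?_ (ha (d j))
    intro y hy z hz
    have hd1 : dist (xk (d j)) xb < r / 2 := Metric.mem_ball.mp hj
    have hd2 : dist xb (xk (d j)) < r / 2 := by rw [dist_comm]; exact hd1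
    have hy' : y ∈ s := hrs (Metric.ball_subset_ball' (by linarith) hy)
    have hz' : z ∈ s := hrs (Metric.ball_subset_ball' (by linarith) hz)
    have := hK.dist_le_mul y hy' z hz'
    calc f y - f z ≤ dist (f y) (f z) := by
          rw [Real.dist_eq]; exact le_abs_self _
      _ ≤ K * dist y z := this
      _ = K * ‖y - z‖ := by rw [dist_eq_norm]
  have hbb : Tendsto (fun j => ‖lk (d j)‖⁻¹ • b (d j)) atTop (𝓝 0) := by
    rw [tendsto_zero_iff_norm_tendsto_zero]
    refine squeeze_zero' (Eventually.of_forall fun j => norm_nonneg _)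
      (g := fun j : ℕ => ((K:ℝ) + 1) * (1 / ((j:ℝ) + 1))) ?_ ?_
    · filter_upwards [hεev, haev] with j h1 h2
      have hbnorm : ‖b (d j)‖ ≤ (K:ℝ) + 1 := by
        have hbeq : b (d j) = εk (d j) - a (d j) := by
          have := heq (d j); rw [this]; abel
        rw [hbeq]
        calc ‖εk (d j) - a (d j)‖ ≤ ‖εk (d j)‖ + ‖a (d j)‖ := norm_sub_le _ _
          _ ≤ (K:ℝ) + 1 := by linarith
      have hinv : ‖lk (d j)‖⁻¹ ≤ 1 / ((j:ℝ) + 1) := by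
        rw [one_div]
        apply inv_anti₀ (by positivity)
        have h3 := hc1 (ψ j)
        have h4 : (j : ℝ) ≤ (ψ j : ℝ) := by exact_mod_cast hψ.le_apply
        calc (j:ℝ) + 1 ≤ (ψ j : ℝ) + 1 := by linarith
          _ ≤ ‖lk (c (ψ j))‖ := h3.le
          _ = ‖lk (d j)‖ := by rw [hddef]
      rw [norm_smul, Real.norm_eq_abs, abs_of_pos (inv_pos.mpr (hnormpos (ψ j)))]
      calc ‖lk (d j)‖⁻¹ * ‖b (d j)‖ ≤ (1 / ((j:ℝ) + 1)) * ((K:ℝ) + 1) := by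
            apply mul_le_mul hinv hbnorm (norm_nonneg _) (by positivity)
        _ = ((K:ℝ) + 1) * (1 / ((j:ℝ) + 1)) := by ring
    · have := tendsto_one_div_add_atTop_nhds_zero_nat.const_mul ((K:ℝ) + 1)
      simpa using this
  -- pass to the limit
  have hp : Tendsto (fun j => pl2 (xk (d j)) (yk (d j))) atTop (𝓝 (pl2 xb 0)) :=
    tendsto_pl2_s6 (hxk.comp hdtop) (hyk.comp hdtop)
  have hvt : Tendsto (fun j => pl2 (‖lk (d j)‖⁻¹ • b (d j)) (-(μ (ψ j)))) atTop
      (𝓝 (pl2 (0 : EuclideanSpace ℝ (Fin n)) (-l))) :=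
    tendsto_pl2_s6 hbb hμψ.neg
  show pl2 (0 : EuclideanSpace ℝ (Fin n)) (-l) ∈ limitingNC (svGraph Φ) (pl2 xb 0)
  exact limiting_robust hscaled hp hvt
end
end

section
/- Let x̄ ∈ M be a local minimizer of problem (P) which is AM-regular. Then x̄ is an M-stationary point of (P): there exists λ ∈ ℝᵐ with 0 ∈ ∂f(x̄) + D*Φ(x̄,0)(λ). -/
set_option maxHeartbeats 4000000
set_option synthInstance.maxHeartbeats 1000000

open Filter Topology RealInnerProductSpace
open scoped ENNReal NNReal

noncomputable section

/-! ### Auxiliary lemmas -/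

section Aux
variable {E F : Type*} [NormedAddCommGroup E] [InnerProductSpace ℝ E]
  [NormedAddCommGroup F] [InnerProductSpace ℝ F]

lemma mem_frechetNC_of_quadBound {A : Set E} {x v : E} (hx : x ∈ A) (c δ0 : ℝ)
    (hδ0 : 0 < δ0) (h : ∀ y ∈ A, ‖y - x‖ < δ0 → ⟪v, y - x⟫ ≤ c * ‖y - x‖ ^ 2) :
    v ∈ frechetNC A x := by
  refine ⟨hx, fun ε hε => ⟨min δ0 (ε / (|c| + 1)), by positivity, fun y hy hlt => ?_⟩⟩
  have h1 : ‖y - x‖ < δ0 := lt_of_lt_of_le hlt (min_le_left _ _)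
  have h2 : ‖y - x‖ < ε / (|c| + 1) := lt_of_lt_of_le hlt (min_le_right _ _)
  have h3 : ‖y - x‖ * (|c| + 1) < ε := by
    rw [← lt_div_iff₀ (by positivity)]; exact h2
  have h4 : ⟪v, y - x⟫ ≤ c * ‖y - x‖ ^ 2 := h y hy h1
  nlinarith [abs_nonneg c, norm_nonneg (y - x), le_abs_self c, sq_nonneg ‖y - x‖]

lemma frechetNC_subset_limitingNC {A : Set E} {x : E} : frechetNC A x ⊆ limitingNC A x :=
  fun v hv => ⟨fun _ => x, fun _ => v, fun _ => hv.1, tendsto_const_nhds, fun _ => hv,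
    tendsto_const_nhds⟩

lemma fst_norm_le_pl2 (p : WithLp 2 (E × F)) : ‖p.fst‖ ≤ ‖p‖ := by
  have h := WithLp.prod_norm_sq_eq_of_L2 p
  nlinarith [norm_nonneg p, norm_nonneg p.fst, norm_nonneg p.snd, sq_nonneg ‖p.snd‖]

/-- A Fréchet-type subgradient inequality gives a Fréchet normal to the epigraph. -/
lemma epi_frechet (f : E → ℝ) (u η : E) (c δ0 : ℝ) (hc : 0 ≤ c) (hδ0 : 0 < δ0)
    (h : ∀ u', ‖u' - u‖ < δ0 → f u + ⟪η, u' - u⟫ - c * ‖u' - u‖ ^ 2 ≤ f u') :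
    pl2 η (-1 : ℝ) ∈ frechetNC
      {p : WithLp 2 (E × ℝ) | f (WithLp.equiv 2 (E × ℝ) p).1 ≤ (WithLp.equiv 2 (E × ℝ) p).2}
      (pl2 u (f u)) := by
  refine mem_frechetNC_of_quadBound (by simp [pl2]) (c + 1) δ0 hδ0 ?_
  intro q hq hlt
  set d := q - pl2 u (f u) with hd
  have hd1 : d.fst = q.fst - u := rfl
  have hd2 : d.snd = q.snd - f u := rfl
  have hn1 : ‖d.fst‖ ≤ ‖d‖ := fst_norm_le_pl2 d
  have hlt1 : ‖q.fst - u‖ < δ0 := by rw [← hd1]; exact lt_of_le_of_lt hn1 hlt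
  have hepi : f q.fst ≤ q.snd := hq
  have hsub := h q.fst hlt1
  have hinner : ⟪pl2 η (-1 : ℝ), d⟫ = ⟪η, d.fst⟫ + (-1) * d.snd := by
    rw [WithLp.prod_inner_apply]; exact congrArg₂ (· + ·) rfl (mul_comm _ _)
  rw [hinner, hd1, hd2]
  have hd1d : ‖q.fst - u‖ ^ 2 ≤ ‖d‖ ^ 2 := by
    rw [← hd1]; exact pow_le_pow_left₀ (norm_nonneg _) hn1 2
  nlinarith [norm_nonneg d, sq_nonneg ‖d‖]

lemma pl2_eta_s9 (p : WithLp 2 (E × F)) : pl2 p.fst p.snd = p := rfl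

lemma pl2_tendsto {a : E} {b : F} {ak : ℕ → E} {bk : ℕ → F}
    (ha : Tendsto ak atTop (𝓝 a)) (hb : Tendsto bk atTop (𝓝 b)) :
    Tendsto (fun j => pl2 (ak j) (bk j)) atTop (𝓝 (pl2 a b)) :=
  ((WithLp.prod_continuous_toLp 2 E F).tendsto (a, b)).comp (ha.prodMk_nhds hb)

lemma norm_sq_tendsto_zero {v : ℕ → E} (h : Tendsto (fun k => ‖v k‖ ^ 2) atTop (𝓝 0)) :
    Tendsto v atTop (𝓝 0) := by
  rw [tendsto_zero_iff_norm_tendsto_zero]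
  have h2 := (Real.continuous_sqrt.tendsto 0).comp h
  rw [Function.comp_def] at h2
  simpa [Real.sqrt_sq (norm_nonneg _)] using h2

end Aux

theorem AM_regular_local_minimizer_is_M_stationary (n m : ℕ)
    (f : EuclideanSpace ℝ (Fin n) → ℝ) (hf : LocallyLipschitz f)
    (Φ : EuclideanSpace ℝ (Fin n) → Set (EuclideanSpace ℝ (Fin m)))
    (hΦ : IsClosed (svGraph Φ))
    (xb : EuclideanSpace ℝ (Fin n)) (hfeas : 0 ∈ Φ xb)
    (hmin : IsLocalMinOn f {x | 0 ∈ Φ x} xb)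
    (hreg : AMregular Φ xb) :
    ∃ l : EuclideanSpace ℝ (Fin m), ∃ a ∈ limSubdiff f xb, ∃ b ∈ coderiv Φ xb 0 l,
      (0 : EuclideanSpace ℝ (Fin n)) = a + b := by
  classical
  -- Lipschitz data
  obtain ⟨Kf, t, ht, hK⟩ := hf xb
  obtain ⟨ε1, hε1, hball1⟩ := Metric.mem_nhds_iff.mp ht
  -- local minimality data
  have hminev : ∀ᶠ x' in 𝓝[{x | 0 ∈ Φ x}] xb, f xb ≤ f x' := hmin
  rw [eventually_iff, Metric.mem_nhdsWithin_iff] at hminev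
  obtain ⟨ε2, hε2, hmin2⟩ := hminev
  set r : ℝ := min ε1 ε2 / 2 with hrdef
  have hr0 : 0 < r := by positivity
  have hrε1 : r < ε1 := by
    have : min ε1 ε2 ≤ ε1 := min_le_left _ _
    simp only [hrdef]; linarith
  have hrε2 : r < ε2 := by
    have : min ε1 ε2 ≤ ε2 := min_le_right _ _
    simp only [hrdef]; linarith
  set zb : WithLp 2 ((EuclideanSpace ℝ (Fin n)) × (EuclideanSpace ℝ (Fin m))) := pl2 xb 0 with hzb
  have hzb1 : zb.fst = xb := rfl
  have hzb2 : zb.snd = 0 := rfl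
  have hzbG : zb ∈ svGraph Φ := hfeas
  -- the compact constraint set
  set S : Set ((EuclideanSpace ℝ (Fin n)) × WithLp 2 ((EuclideanSpace ℝ (Fin n)) × (EuclideanSpace ℝ (Fin m)))) :=
    {q | ‖q.1 - xb‖ ≤ r ∧ q.2 ∈ svGraph Φ ∧ ‖q.2 - zb‖ ≤ r} with hSdef
  have hub : ((xb, zb) : (EuclideanSpace ℝ (Fin n)) × WithLp 2 ((EuclideanSpace ℝ (Fin n)) × (EuclideanSpace ℝ (Fin m)))) ∈ S := by
    refine ⟨by simpa using hr0.le, hzbG, by simpa using hr0.le⟩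
  have hScl : IsClosed S := by
    have c1 : Continuous fun q : (EuclideanSpace ℝ (Fin n)) × WithLp 2 ((EuclideanSpace ℝ (Fin n)) × (EuclideanSpace ℝ (Fin m))) => ‖q.1 - xb‖ :=
      (continuous_fst.sub continuous_const).norm
    have c2 : Continuous fun q : (EuclideanSpace ℝ (Fin n)) × WithLp 2 ((EuclideanSpace ℝ (Fin n)) × (EuclideanSpace ℝ (Fin m))) => ‖q.2 - zb‖ :=
      (continuous_snd.sub continuous_const).norm
    have : S = {q : (EuclideanSpace ℝ (Fin n)) × WithLp 2 ((EuclideanSpace ℝ (Fin n)) × (EuclideanSpace ℝ (Fin m))) | ‖q.1 - xb‖ ≤ r} ∩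
        (Prod.snd ⁻¹' svGraph Φ) ∩ {q | ‖q.2 - zb‖ ≤ r} := by
      ext q; simp [hSdef, Set.mem_setOf_eq, and_assoc]
    rw [this]
    exact ((isClosed_le c1 continuous_const).inter (hΦ.preimage continuous_snd)).inter
      (isClosed_le c2 continuous_const)
  have hSb : Bornology.IsBounded S := by
    apply (Metric.isBounded_closedBall (x := ((xb, zb) : (EuclideanSpace ℝ (Fin n)) × WithLp 2 ((EuclideanSpace ℝ (Fin n)) × (EuclideanSpace ℝ (Fin m))))) (r := r)).subset
    intro q hq
    rw [Metric.mem_closedBall, Prod.dist_eq]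
    exact max_le (by rw [dist_eq_norm]; exact hq.1) (by rw [dist_eq_norm]; exact hq.2.2)
  have hSc : IsCompact S := Metric.isCompact_of_isClosed_isBounded hScl hSb
  -- the penalty functions
  set Ψ : ℕ → (EuclideanSpace ℝ (Fin n)) × WithLp 2 ((EuclideanSpace ℝ (Fin n)) × (EuclideanSpace ℝ (Fin m))) → ℝ := fun k q =>
    f q.1 + ((k : ℝ) + 1) * (‖q.1 - q.2.fst‖ ^ 2 + ‖q.2.snd‖ ^ 2) + ‖q.1 - xb‖ ^ 2 with hΨdef
  have hc21 : Continuous fun q : (EuclideanSpace ℝ (Fin n)) × WithLp 2 ((EuclideanSpace ℝ (Fin n)) × (EuclideanSpace ℝ (Fin m))) => q.2.fst :=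
    (WithLp.continuous_fst 2 (EuclideanSpace ℝ (Fin n)) (EuclideanSpace ℝ (Fin m))).comp continuous_snd
  have hc22 : Continuous fun q : (EuclideanSpace ℝ (Fin n)) × WithLp 2 ((EuclideanSpace ℝ (Fin n)) × (EuclideanSpace ℝ (Fin m))) => q.2.snd :=
    (WithLp.continuous_snd 2 (EuclideanSpace ℝ (Fin n)) (EuclideanSpace ℝ (Fin m))).comp continuous_snd
  have hΨcont : ∀ k, Continuous (Ψ k) := by
    intro k
    apply Continuous.add
    apply Continuous.add
    · exact hf.continuous.comp continuous_fst
    · exact continuous_const.mul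
        ((((continuous_fst.sub hc21).norm.pow 2)).add ((hc22.norm.pow 2)))
    · exact ((continuous_fst.sub continuous_const).norm.pow 2)
  -- minimizers
  have hexists : ∀ k : ℕ, ∃ q ∈ S, IsMinOn (Ψ k) S q := fun k =>
    hSc.exists_isMinOn ⟨_, hub⟩ (hΨcont k).continuousOn
  choose q hqS hqmin using hexists
  set u : ℕ → (EuclideanSpace ℝ (Fin n)) := fun k => (q k).1 with hu
  set px : ℕ → WithLp 2 ((EuclideanSpace ℝ (Fin n)) × (EuclideanSpace ℝ (Fin m))) := fun k => (q k).2 with hpx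
  set xx : ℕ → (EuclideanSpace ℝ (Fin n)) := fun k => (px k).fst with hxx
  set yy : ℕ → (EuclideanSpace ℝ (Fin m)) := fun k => (px k).snd with hyy
  have hqeta : ∀ k, q k = (u k, px k) := fun k => rfl
  have hpxeta : ∀ k, px k = pl2 (xx k) (yy k) := fun k => rfl
  -- the value bound
  have hΨub : ∀ k, Ψ k (q k) ≤ f xb := by
    intro k
    have h1 := isMinOn_iff.mp (hqmin k) _ hub
    have h2 : Ψ k (xb, zb) = f xb := by
      simp [hΨdef, hzb1, hzb2]
    linarith [h1, h2.le, h2.ge]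
  -- lower bound for f on S
  obtain ⟨qm, hqmS, hqmmin⟩ := hSc.exists_isMinOn ⟨_, hub⟩
    ((hf.continuous.comp continuous_fst).continuousOn :
      ContinuousOn (fun q : (EuclideanSpace ℝ (Fin n)) × WithLp 2 ((EuclideanSpace ℝ (Fin n)) × (EuclideanSpace ℝ (Fin m))) => f q.1) S)
  set C : ℝ := f qm.1 with hC
  have hCle : ∀ k, C ≤ f (u k) := fun k => isMinOn_iff.mp hqmmin _ (hqS k)
  -- penalty terms go to zero
  have hpen : ∀ k : ℕ, ((k : ℝ) + 1) * (‖u k - xx k‖ ^ 2 + ‖yy k‖ ^ 2) ≤ f xb - C := by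
    intro k
    have h1 := hΨub k
    have h2 := hCle k
    have h3 : (0:ℝ) ≤ ‖u k - xb‖ ^ 2 := sq_nonneg _
    simp only [hΨdef] at h1
    linarith [h1, h2, h3]
  have hfxbC : 0 ≤ f xb - C := by
    have := hpen 0
    nlinarith [sq_nonneg ‖u 0 - xx 0‖, sq_nonneg ‖yy 0‖]
  have hpen0 : Tendsto (fun k => ‖u k - xx k‖ ^ 2 + ‖yy k‖ ^ 2) atTop (𝓝 0) := by
    have hgb : ∀ k : ℕ, ‖u k - xx k‖ ^ 2 + ‖yy k‖ ^ 2 ≤ (f xb - C) * (1 / ((k:ℝ)+1)) := by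
      intro k
      rw [mul_one_div, le_div_iff₀ (by positivity)]
      linarith [hpen k]
    have hgt : Tendsto (fun k : ℕ => (f xb - C) * (1 / ((k:ℝ)+1))) atTop (𝓝 0) := by
      simpa using tendsto_one_div_add_atTop_nhds_zero_nat.const_mul (f xb - C)
    exact squeeze_zero (fun k => by positivity) hgb hgt
  have hdiff0 : Tendsto (fun k => u k - xx k) atTop (𝓝 0) := by
    apply norm_sq_tendsto_zero
    refine squeeze_zero (fun k => sq_nonneg _) (fun k => ?_) hpen0
    nlinarith [sq_nonneg ‖yy k‖]
  have hyy0 : Tendsto yy atTop (𝓝 0) := by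
    apply norm_sq_tendsto_zero
    refine squeeze_zero (fun k => sq_nonneg _) (fun k => ?_) hpen0
    nlinarith [sq_nonneg ‖u k - xx k‖]
  -- convergent subsequence of minimizers
  obtain ⟨qlim, hqlimS, φ, hφmono, hφtend⟩ := hSc.tendsto_subseq hqS
  have hφat : Tendsto φ atTop atTop := hφmono.tendsto_atTop
  have hutend : Tendsto (fun j => u (φ j)) atTop (𝓝 qlim.1) :=
    (continuous_fst.tendsto qlim).comp hφtend
  have hpxtend : Tendsto (fun j => px (φ j)) atTop (𝓝 qlim.2) :=
    (continuous_snd.tendsto qlim).comp hφtend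
  have hxxtend : Tendsto (fun j => xx (φ j)) atTop (𝓝 qlim.2.fst) :=
    (hc21.tendsto qlim).comp hφtend
  have hyytend : Tendsto (fun j => yy (φ j)) atTop (𝓝 qlim.2.snd) :=
    (hc22.tendsto qlim).comp hφtend
  -- identify the limit
  have heq1 : qlim.1 = qlim.2.fst := by
    have h1 : Tendsto (fun j => u (φ j) - xx (φ j)) atTop (𝓝 (qlim.1 - qlim.2.fst)) :=
      hutend.sub hxxtend
    have h2 : Tendsto (fun j => u (φ j) - xx (φ j)) atTop (𝓝 0) :=
      hdiff0.comp hφat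
    have := tendsto_nhds_unique h1 h2
    exact sub_eq_zero.mp this
  have heq2 : qlim.2.snd = 0 := by
    have h2 : Tendsto (fun j => yy (φ j)) atTop (𝓝 0) := hyy0.comp hφat
    exact tendsto_nhds_unique hyytend h2
  have hfeas' : (0 : (EuclideanSpace ℝ (Fin m))) ∈ Φ qlim.1 := by
    have hG : qlim.2 ∈ svGraph Φ := hqlimS.2.1
    have : qlim.2.snd ∈ Φ qlim.2.fst := hG
    rwa [heq2, ← heq1] at this
  have hle : f qlim.1 + ‖qlim.1 - xb‖ ^ 2 ≤ f xb := by
    have hterm : ∀ j, f (u (φ j)) + ‖u (φ j) - xb‖ ^ 2 ≤ f xb := by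
      intro j
      have h1 := hΨub (φ j)
      simp only [hΨdef] at h1
      nlinarith [sq_nonneg ‖u (φ j) - xx (φ j)‖, sq_nonneg ‖yy (φ j)‖]
    have htt : Tendsto (fun j => f (u (φ j)) + ‖u (φ j) - xb‖ ^ 2) atTop
        (𝓝 (f qlim.1 + ‖qlim.1 - xb‖ ^ 2)) := by
      apply Tendsto.add
      · exact (hf.continuous.tendsto qlim.1).comp hutend
      · have : Tendsto (fun j => u (φ j) - xb) atTop (𝓝 (qlim.1 - xb)) :=
          hutend.sub tendsto_const_nhds
        exact ((continuous_norm.tendsto _).comp this).pow 2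
    exact le_of_tendsto htt (Eventually.of_forall hterm)
  have hge : f xb ≤ f qlim.1 := by
    apply hmin2
    constructor
    · rw [Metric.mem_ball, dist_eq_norm]
      exact lt_of_le_of_lt hqlimS.1 hrε2
    · exact hfeas'
  have hqlim1 : qlim.1 = xb := by
    have h0 : ‖qlim.1 - xb‖ ^ 2 ≤ 0 := by linarith
    have : ‖qlim.1 - xb‖ = 0 := by nlinarith [norm_nonneg (qlim.1 - xb), sq_nonneg ‖qlim.1 - xb‖]
    rw [norm_eq_zero, sub_eq_zero] at this
    exact this
  have hqlim2 : qlim.2 = zb := by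
    have : qlim.2 = pl2 qlim.2.fst qlim.2.snd := (pl2_eta_s9 qlim.2).symm
    rw [this, heq2, ← heq1, hqlim1]
  rw [hqlim1] at hutend
  rw [hqlim2] at hpxtend
  have hxxtend' : Tendsto (fun j => xx (φ j)) atTop (𝓝 xb) := by
    rw [← heq1, hqlim1] at hxxtend; exact hxxtend
  -- eventual interiority
  have hev : ∀ᶠ j in atTop, ‖u (φ j) - xb‖ < r ∧ ‖px (φ j) - zb‖ < r := by
    have h1 : ∀ᶠ j in atTop, ‖u (φ j) - xb‖ < r := by
      have := Metric.tendsto_nhds.mp hutend r hr0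
      simpa [dist_eq_norm] using this
    have h2 : ∀ᶠ j in atTop, ‖px (φ j) - zb‖ < r := by
      have := Metric.tendsto_nhds.mp hpxtend r hr0
      simpa [dist_eq_norm] using this
    exact h1.and h2
  obtain ⟨N, hN⟩ := eventually_atTop.mp hev
  -- the dual sequences
  set η : ℕ → (EuclideanSpace ℝ (Fin n)) := fun k =>
    (2 * ((k : ℝ) + 1)) • (xx k - u k) + (2 : ℝ) • (xb - u k) with hηdef
  set w : ℕ → WithLp 2 ((EuclideanSpace ℝ (Fin n)) × (EuclideanSpace ℝ (Fin m))) := fun k =>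
    pl2 ((2 * ((k : ℝ) + 1)) • (u k - xx k)) ((-(2 * ((k : ℝ) + 1))) • yy k) with hwdef
  -- Fréchet subgradient inequality
  have hsubgrad : ∀ k, ‖u k - xb‖ < r → ∀ u', ‖u' - u k‖ < r - ‖u k - xb‖ →
      f (u k) + ⟪η k, u' - u k⟫ - ((k : ℝ) + 2) * ‖u' - u k‖ ^ 2 ≤ f u' := by
    intro k hk u' hu'
    have hS' : ((u', px k) : (EuclideanSpace ℝ (Fin n)) × WithLp 2 ((EuclideanSpace ℝ (Fin n)) × (EuclideanSpace ℝ (Fin m)))) ∈ S := by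
      refine ⟨?_, (hqS k).2.1, (hqS k).2.2⟩
      calc ‖u' - xb‖ ≤ ‖u' - u k‖ + ‖u k - xb‖ := norm_sub_le_norm_sub_add_norm_sub _ _ _
        _ ≤ r := by linarith
    have hmin' := isMinOn_iff.mp (hqmin k) _ hS'
    simp only [hΨdef] at hmin'
    have e1 : ‖u' - xx k‖ ^ 2 =
        ‖u k - xx k‖ ^ 2 + 2 * ⟪u k - xx k, u' - u k⟫ + ‖u' - u k‖ ^ 2 := by
      have h : u' - xx k = (u k - xx k) + (u' - u k) := by abel
      rw [h, norm_add_sq_real]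
    have e2 : ‖u' - xb‖ ^ 2 =
        ‖u k - xb‖ ^ 2 + 2 * ⟪u k - xb, u' - u k⟫ + ‖u' - u k‖ ^ 2 := by
      have h : u' - xb = (u k - xb) + (u' - u k) := by abel
      rw [h, norm_add_sq_real]
    have e3 : ⟪η k, u' - u k⟫ =
        -(2 * ((k : ℝ) + 1)) * ⟪u k - xx k, u' - u k⟫ + -2 * ⟪u k - xb, u' - u k⟫ := by
      have h1 : xx k - u k = -(u k - xx k) := by abel
      have h2 : xb - u k = -(u k - xb) := by abel
      simp only [hηdef, inner_add_left, real_inner_smul_left, h1, h2, inner_neg_left]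
      ring
    rw [e3]
    nlinarith [hmin']
  -- Fréchet normal to the graph
  have hgraphnormal : ∀ k, ‖px k - zb‖ < r → w k ∈ frechetNC (svGraph Φ) (px k) := by
    intro k hk
    apply mem_frechetNC_of_quadBound (hqS k).2.1 ((k : ℝ) + 1) (r - ‖px k - zb‖)
      (by linarith)
    intro p' hp' hlt
    have hS' : ((u k, p') : (EuclideanSpace ℝ (Fin n)) × WithLp 2 ((EuclideanSpace ℝ (Fin n)) × (EuclideanSpace ℝ (Fin m)))) ∈ S := by
      refine ⟨(hqS k).1, hp', ?_⟩
      calc ‖p' - zb‖ ≤ ‖p' - px k‖ + ‖px k - zb‖ := norm_sub_le_norm_sub_add_norm_sub _ _ _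
        _ ≤ r := by linarith
    have hmin' := isMinOn_iff.mp (hqmin k) _ hS'
    simp only [hΨdef] at hmin'
    have hd1 : (p' - px k).fst = p'.fst - xx k := rfl
    have hd2 : (p' - px k).snd = p'.snd - yy k := rfl
    have hnorm2 : ‖p' - px k‖ ^ 2 = ‖p'.fst - xx k‖ ^ 2 + ‖p'.snd - yy k‖ ^ 2 := by
      rw [WithLp.prod_norm_sq_eq_of_L2, hd1, hd2]
    have hinner : ⟪w k, p' - px k⟫ =
        (2 * ((k : ℝ) + 1)) * ⟪u k - xx k, p'.fst - xx k⟫ +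
        (-(2 * ((k : ℝ) + 1))) * ⟪yy k, p'.snd - yy k⟫ := by
      have : ⟪w k, p' - px k⟫ =
          ⟪(2 * ((k : ℝ) + 1)) • (u k - xx k), (p' - px k).fst⟫ +
          ⟪(-(2 * ((k : ℝ) + 1))) • yy k, (p' - px k).snd⟫ := by
          rw [WithLp.prod_inner_apply]; rfl
      rw [this, hd1, hd2, real_inner_smul_left, real_inner_smul_left]
    have e1 : ‖u k - p'.fst‖ ^ 2 =
        ‖u k - xx k‖ ^ 2 - 2 * ⟪u k - xx k, p'.fst - xx k⟫ + ‖p'.fst - xx k‖ ^ 2 := by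
      have h : u k - p'.fst = (u k - xx k) - (p'.fst - xx k) := by abel
      rw [h, norm_sub_sq_real]
    have e2 : ‖p'.snd‖ ^ 2 = ‖yy k‖ ^ 2 + 2 * ⟪yy k, p'.snd - yy k⟫ + ‖p'.snd - yy k‖ ^ 2 := by
      have h : p'.snd = yy k + (p'.snd - yy k) := by abel
      rw [h]
      rw [norm_add_sq_real]
      have h2 : yy k + (p'.snd - yy k) - yy k = p'.snd - yy k := by abel
      rw [h2]
    rw [hinner, hnorm2]
    nlinarith [hmin']
  -- bound on the subgradients
  have hbound : ∀ k, ‖u k - xb‖ < r → ‖η k‖ ≤ (Kf : ℝ) := by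
    intro k hk
    by_cases hz : η k = 0
    · simp [hz]
    have hM : 0 < ‖η k‖ := norm_pos_iff.mpr hz
    have hukt : u k ∈ t := hball1 (by rw [Metric.mem_ball, dist_eq_norm]; linarith)
    have hs : ‖η k‖ ^ 2 ≤ (Kf : ℝ) * ‖η k‖ := by
      apply le_of_forall_pos_le_add
      intro ε hε
      set τ : ℝ := min (ε / (((k : ℝ) + 2) * ‖η k‖ ^ 2))
        (min (r - ‖u k - xb‖) (ε1 - ‖u k - xb‖) / (2 * ‖η k‖)) with hτdef
      have hτpos : 0 < τ := by
        apply lt_min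
        · positivity
        · apply div_pos (lt_min (by linarith) (by linarith)) (by positivity)
      set u' : (EuclideanSpace ℝ (Fin n)) := u k + τ • η k with hu'def
      have hdiff : u' - u k = τ • η k := by simp [hu'def]
      have hndiff : ‖u' - u k‖ = τ * ‖η k‖ := by
        rw [hdiff, norm_smul, Real.norm_eq_abs, abs_of_pos hτpos]
      have hτ2 : τ * ‖η k‖ < min (r - ‖u k - xb‖) (ε1 - ‖u k - xb‖) := by
        have h1 : τ ≤ min (r - ‖u k - xb‖) (ε1 - ‖u k - xb‖) / (2 * ‖η k‖) :=
          min_le_right _ _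
        have h2 : τ * ‖η k‖ ≤ min (r - ‖u k - xb‖) (ε1 - ‖u k - xb‖) / 2 := by
          rw [div_mul_eq_div_div] at h1
          calc τ * ‖η k‖ ≤ (min (r - ‖u k - xb‖) (ε1 - ‖u k - xb‖) / 2 / ‖η k‖) * ‖η k‖ :=
            mul_le_mul_of_nonneg_right h1 (norm_nonneg _)
            _ = min (r - ‖u k - xb‖) (ε1 - ‖u k - xb‖) / 2 := by
              rw [div_mul_cancel₀ _ hM.ne']
        have h3 : 0 < min (r - ‖u k - xb‖) (ε1 - ‖u k - xb‖) :=
          lt_min (by linarith) (by linarith)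
        linarith
      have hless : ‖u' - u k‖ < r - ‖u k - xb‖ := by
        rw [hndiff]
        exact lt_of_lt_of_le hτ2 (min_le_left _ _)
      have hu't : u' ∈ t := by
        apply hball1
        rw [Metric.mem_ball, dist_eq_norm]
        calc ‖u' - xb‖ ≤ ‖u' - u k‖ + ‖u k - xb‖ := norm_sub_le_norm_sub_add_norm_sub _ _ _
          _ < (ε1 - ‖u k - xb‖) + ‖u k - xb‖ := by
              rw [hndiff]; exact add_lt_add_left (lt_of_lt_of_le hτ2 (min_le_right _ _)) _
          _ = ε1 := by ring
      have hlip : f u' - f (u k) ≤ (Kf : ℝ) * ‖u' - u k‖ := by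
        have := hK.dist_le_mul u' hu't (u k) hukt
        rw [Real.dist_eq, dist_eq_norm] at this
        exact le_trans (le_abs_self _) this
      have hsg := hsubgrad k hk u' hless
      have hinn : ⟪η k, u' - u k⟫ = τ * ‖η k‖ ^ 2 := by
        rw [hdiff, real_inner_smul_right, real_inner_self_eq_norm_sq]
      have hA : τ * ‖η k‖ ^ 2 - ((k : ℝ) + 2) * (τ * ‖η k‖) ^ 2 ≤ (Kf : ℝ) * (τ * ‖η k‖) := by
        rw [← hinn, ← hndiff]
        linarith [hsg, hlip]
      have hA2 : τ * (‖η k‖ ^ 2 - ((k : ℝ) + 2) * τ * ‖η k‖ ^ 2) ≤ τ * ((Kf : ℝ) * ‖η k‖) := by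
        ring_nf
        ring_nf at hA
        linarith [hA]
      have hA3 : ‖η k‖ ^ 2 - ((k : ℝ) + 2) * τ * ‖η k‖ ^ 2 ≤ (Kf : ℝ) * ‖η k‖ :=
        le_of_mul_le_mul_left hA2 hτpos
      have hB : ((k : ℝ) + 2) * τ * ‖η k‖ ^ 2 ≤ ε := by
        have h1 : τ ≤ ε / (((k : ℝ) + 2) * ‖η k‖ ^ 2) := min_le_left _ _
        have h2 : 0 < ((k : ℝ) + 2) * ‖η k‖ ^ 2 := by positivity
        calc ((k : ℝ) + 2) * τ * ‖η k‖ ^ 2 = τ * (((k : ℝ) + 2) * ‖η k‖ ^ 2) := by ring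
          _ ≤ (ε / (((k : ℝ) + 2) * ‖η k‖ ^ 2)) * (((k : ℝ) + 2) * ‖η k‖ ^ 2) :=
            mul_le_mul_of_nonneg_right h1 h2.le
          _ = ε := by field_simp
      linarith
    have hs' : ‖η k‖ * ‖η k‖ ≤ (Kf : ℝ) * ‖η k‖ := by rw [← pow_two]; exact hs
    exact le_of_mul_le_mul_right hs' hM
  -- pass to a further subsequence along which η converges
  set ζ : ℕ → ℕ := fun j => φ (j + N) with hζdef
  have hζint : ∀ j, ‖u (ζ j) - xb‖ < r ∧ ‖px (ζ j) - zb‖ < r := fun j =>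
    hN (j + N) (Nat.le_add_left N j)
  have haddat : Tendsto (fun j : ℕ => j + N) atTop atTop := tendsto_add_atTop_nat N
  have hζu : Tendsto (fun j => u (ζ j)) atTop (𝓝 xb) := hutend.comp haddat
  have hζpx : Tendsto (fun j => px (ζ j)) atTop (𝓝 zb) := hpxtend.comp haddat
  have hζxx : Tendsto (fun j => xx (ζ j)) atTop (𝓝 xb) := hxxtend'.comp haddat
  have hζyy : Tendsto (fun j => yy (ζ j)) atTop (𝓝 0) := (hyy0.comp hφat).comp haddat
  have hηbd : ∀ j, ‖η (ζ j)‖ ≤ (Kf : ℝ) := fun j => hbound (ζ j) (hζint j).1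
  obtain ⟨a, ψ, hψmono, haη⟩ : ∃ a, ∃ ψ : ℕ → ℕ, StrictMono ψ ∧
      Tendsto ((fun j => η (ζ j)) ∘ ψ) atTop (𝓝 a) := by
    have hc : IsCompact (Metric.closedBall (0 : (EuclideanSpace ℝ (Fin n))) (Kf : ℝ)) := isCompact_closedBall 0 _
    obtain ⟨a, _, ψ, hψ, hψt⟩ := hc.tendsto_subseq (x := fun j => η (ζ j)) (fun j => by
      simpa [Metric.mem_closedBall, dist_zero_right] using hηbd j)
    exact ⟨a, ψ, hψ, hψt⟩
  have hψat : Tendsto ψ atTop atTop := hψmono.tendsto_atTop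
  have hθu : Tendsto (fun j => u (ζ (ψ j))) atTop (𝓝 xb) := hζu.comp hψat
  have hθxx : Tendsto (fun j => xx (ζ (ψ j))) atTop (𝓝 xb) := hζxx.comp hψat
  have hθyy : Tendsto (fun j => yy (ζ (ψ j))) atTop (𝓝 0) := hζyy.comp hψat
  have hθη : Tendsto (fun j => η (ζ (ψ j))) atTop (𝓝 a) := haη
  have hθint : ∀ j, ‖u (ζ (ψ j)) - xb‖ < r ∧ ‖px (ζ (ψ j)) - zb‖ < r := fun j => hζint (ψ j)
  -- a ∈ limSubdiff f xb
  have hamem : a ∈ limSubdiff f xb := by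
    refine ⟨fun j => pl2 (u (ζ (ψ j))) (f (u (ζ (ψ j)))), fun j => pl2 (η (ζ (ψ j))) (-1), ?_, ?_, ?_, ?_⟩
    · intro j
      show f (u (ζ (ψ j))) ≤ f (u (ζ (ψ j)))
      exact le_refl _
    · exact pl2_tendsto hθu ((hf.continuous.tendsto xb).comp hθu)
    · intro j
      apply epi_frechet f (u (ζ (ψ j))) (η (ζ (ψ j))) ((ζ (ψ j) : ℝ) + 2) (r - ‖u (ζ (ψ j)) - xb‖)
        (by positivity) (by linarith [(hθint j).1])
      intro u' hu'
      exact hsubgrad (ζ (ψ j)) (hθint j).1 u' hu'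
    · exact pl2_tendsto hθη tendsto_const_nhds
  -- -a ∈ MmapLimsup Φ xb
  have hMlim : -a ∈ MmapLimsup Φ xb := by
    refine ⟨fun j => xx (ζ (ψ j)),
      fun j => (2 * ((ζ (ψ j) : ℝ) + 1)) • (u (ζ (ψ j)) - xx (ζ (ψ j))),
      fun j => yy (ζ (ψ j)), hθxx, hθyy, ?_, ?_⟩
    · have hrewrite : ∀ j, (2 * ((ζ (ψ j) : ℝ) + 1)) • (u (ζ (ψ j)) - xx (ζ (ψ j))) =
          -(η (ζ (ψ j))) + (2 : ℝ) • (xb - u (ζ (ψ j))) := by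
        intro j
        simp only [hηdef]
        module
      have h1 : Tendsto (fun j => -(η (ζ (ψ j))) + (2 : ℝ) • (xb - u (ζ (ψ j)))) atTop
          (𝓝 (-a + (2:ℝ) • (xb - xb))) :=
        hθη.neg.add ((tendsto_const_nhds.sub hθu).const_smul (2:ℝ))
      simp only [sub_self, smul_zero, add_zero] at h1
      exact (Tendsto.congr (fun j => (hrewrite j).symm) h1)
    · intro j
      apply Set.mem_iUnion.mpr
      refine ⟨(2 * ((ζ (ψ j) : ℝ) + 1)) • yy (ζ (ψ j)), ?_⟩
      show pl2 _ (-((2 * ((ζ (ψ j) : ℝ) + 1)) • yy (ζ (ψ j)))) ∈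
        limitingNC (svGraph Φ) (pl2 (xx (ζ (ψ j))) (yy (ζ (ψ j))))
      rw [← neg_smul, ← hpxeta (ζ (ψ j))]
      exact frechetNC_subset_limitingNC (hgraphnormal (ζ (ψ j)) (hθint j).2)
  -- conclude by AM-regularity
  have hfinal : -a ∈ Mmap Φ xb 0 := hreg hMlim
  obtain ⟨l, hl⟩ := Set.mem_iUnion.mp hfinal
  exact ⟨l, a, hamem, -a, hl, by simp⟩
end
end
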